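/- arXiv:1002.3986 — 14 statements merged into one kernel-verified Lean document; each statement's English description precedes it below -/
import Mathlib

section
/- Let α, β : ℝ³ → ℝ be smooth functions of (t,x,u) and set f(t,x,u,p) = α(t,x,u)·p + β(t,x,u). Then smooth functions τ, ξ, η : ℝ³ → ℝ of (t,x,u) satisfy the determining equation of u_t + f(t,x,u,u_x) = 0 for all (t,x,u,p) ∈ ℝ⁴ if and only if for all (t,x,u): (D1) η_t + β(τ_t − η_u) + β_x ξ + β_t τ + β_u η − β² τ_u + α η_x + α β τ_x = 0 and (D2) −ξ_t + α τ_t + β ξ_u + α_x ξ + α_t τ + α_u η − α β τ_u − α ξ_x + α² τ_x = 0. -/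
noncomputable section

/-- Partial derivative in the first variable (t) of a function of (t,x,u). -/
def pt (g : ℝ → ℝ → ℝ → ℝ) (t x u : ℝ) : ℝ := deriv (fun s => g s x u) t
/-- Partial derivative in the second variable (x). -/
def px (g : ℝ → ℝ → ℝ → ℝ) (t x u : ℝ) : ℝ := deriv (fun s => g t s u) x
/-- Partial derivative in the third variable (u). -/
def pu (g : ℝ → ℝ → ℝ → ℝ) (t x u : ℝ) : ℝ := deriv (fun s => g t x s) u

/-- Smoothness of a function of three real variables. -/
def Smooth3 (g : ℝ → ℝ → ℝ → ℝ) : Prop :=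
  ContDiff ℝ (⊤ : ℕ∞) (fun q : ℝ × ℝ × ℝ => g q.1 q.2.1 q.2.2)

/-- Partial derivatives of a function f = f(t,x,u,p) of four real variables. -/
def fT (f : ℝ → ℝ → ℝ → ℝ → ℝ) (t x u p : ℝ) : ℝ := deriv (fun s => f s x u p) t
def fX (f : ℝ → ℝ → ℝ → ℝ → ℝ) (t x u p : ℝ) : ℝ := deriv (fun s => f t s u p) x
def fU (f : ℝ → ℝ → ℝ → ℝ → ℝ) (t x u p : ℝ) : ℝ := deriv (fun s => f t x s p) u
def fP (f : ℝ → ℝ → ℝ → ℝ → ℝ) (t x u p : ℝ) : ℝ := deriv (fun s => f t x u s) p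


lemma d1 {g : ℝ → ℝ → ℝ → ℝ} (hg : Smooth3 g) (t x u : ℝ) :
    HasDerivAt (fun s => g s x u) (pt g t x u) t := by
  have h : Differentiable ℝ (fun s : ℝ => g s x u) := by
    have := (hg.differentiable (by simp))
    exact this.comp (differentiable_id.prodMk (differentiable_const (x, u)))
  exact (h t).hasDerivAt

lemma d2 {g : ℝ → ℝ → ℝ → ℝ} (hg : Smooth3 g) (t x u : ℝ) :
    HasDerivAt (fun s => g t s u) (px g t x u) x := by
  have h : Differentiable ℝ (fun s : ℝ => g t s u) := by
    have := (hg.differentiable (by simp))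
    exact this.comp ((differentiable_const t).prodMk
      (differentiable_id.prodMk (differentiable_const u)))
  exact (h x).hasDerivAt

lemma d3 {g : ℝ → ℝ → ℝ → ℝ} (hg : Smooth3 g) (t x u : ℝ) :
    HasDerivAt (fun s => g t x s) (pu g t x u) u := by
  have h : Differentiable ℝ (fun s : ℝ => g t x s) := by
    have := (hg.differentiable (by simp))
    exact this.comp ((differentiable_const t).prodMk
      ((differentiable_const x).prodMk differentiable_id))
  exact (h u).hasDerivAt

lemma fT_eval (α β : ℝ → ℝ → ℝ → ℝ) (hα : Smooth3 α) (hβ : Smooth3 β) (t x u p : ℝ) :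
    fT (fun t x u p => α t x u * p + β t x u) t x u p
      = pt α t x u * p + pt β t x u := by
  exact (((d1 hα t x u).mul_const p).add (d1 hβ t x u)).deriv

lemma fX_eval (α β : ℝ → ℝ → ℝ → ℝ) (hα : Smooth3 α) (hβ : Smooth3 β) (t x u p : ℝ) :
    fX (fun t x u p => α t x u * p + β t x u) t x u p
      = px α t x u * p + px β t x u := by
  exact (((d2 hα t x u).mul_const p).add (d2 hβ t x u)).deriv

lemma fU_eval (α β : ℝ → ℝ → ℝ → ℝ) (hα : Smooth3 α) (hβ : Smooth3 β) (t x u p : ℝ) :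
    fU (fun t x u p => α t x u * p + β t x u) t x u p
      = pu α t x u * p + pu β t x u := by
  exact (((d3 hα t x u).mul_const p).add (d3 hβ t x u)).deriv

lemma fP_eval (α β : ℝ → ℝ → ℝ → ℝ) (t x u p : ℝ) :
    fP (fun t x u p => α t x u * p + β t x u) t x u p = α t x u := by
  have h : HasDerivAt (fun s : ℝ => α t x u * s + β t x u) (α t x u) p := by
    simpa using ((hasDerivAt_id p).const_mul (α t x u)).add_const (β t x u)
  exact h.deriv

/-- τ, ξ, η satisfy the determining equation of u_t + f(t,x,u,u_x) = 0. -/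
def DetEq (f : ℝ → ℝ → ℝ → ℝ → ℝ) (τ ξ η : ℝ → ℝ → ℝ → ℝ) : Prop :=
  ∀ t x u p : ℝ,
    pt η t x u - pt ξ t x u * p
      + (pt τ t x u - pu η t x u + pu ξ t x u * p) * f t x u p
      + ξ t x u * fX f t x u p + τ t x u * fT f t x u p + η t x u * fU f t x u p
      - pu τ t x u * (f t x u p) ^ 2
      + (px η t x u + pu η t x u * p - px ξ t x u * p - pu ξ t x u * p ^ 2) * fP f t x u p
      + (px τ t x u + pu τ t x u * p) * f t x u p * fP f t x u p = 0

theorem determining_equations_of_quasilinear_eq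
    (α β τ ξ η : ℝ → ℝ → ℝ → ℝ)
    (hα : Smooth3 α) (hβ : Smooth3 β)
    (hτ : Smooth3 τ) (hξ : Smooth3 ξ) (hη : Smooth3 η) :
    DetEq (fun t x u p => α t x u * p + β t x u) τ ξ η ↔
      (∀ t x u : ℝ,
        (pt η t x u + β t x u * (pt τ t x u - pu η t x u) + px β t x u * ξ t x u
          + pt β t x u * τ t x u + pu β t x u * η t x u - (β t x u) ^ 2 * pu τ t x u
          + α t x u * px η t x u + α t x u * β t x u * px τ t x u = 0)
        ∧
        (-(pt ξ t x u) + α t x u * pt τ t x u + β t x u * pu ξ t x u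
          + px α t x u * ξ t x u + pt α t x u * τ t x u + pu α t x u * η t x u
          - α t x u * β t x u * pu τ t x u - α t x u * px ξ t x u
          + (α t x u) ^ 2 * px τ t x u = 0)) := by
  constructor
  · intro h t x u
    have h0 := h t x u 0
    have h1 := h t x u 1
    simp only [fT_eval α β hα hβ, fX_eval α β hα hβ, fU_eval α β hα hβ,
      fP_eval α β] at h0 h1
    constructor
    · linear_combination h0
    · linear_combination h1 - h0
  · intro h t x u p
    obtain ⟨h1, h2⟩ := h t x u
    simp only [fT_eval α β hα hβ, fX_eval α β hα hβ, fU_eval α β hα hβ, fP_eval α β]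
    linear_combination h1 + p * h2
end
end

section
/- Let α, β : ℝ³ → ℝ be smooth functions of (t,x,u), set f(t,x,u,p) = α(t,x,u)·p + β(t,x,u), and let φ : ℝ → ℝ be a smooth function such that β_u(t,x,u)·φ(u) + φ'(u)·β(t,x,u) = φ(u)·α_x(t,x,u) for all (t,x,u). Then for every smooth u : ℝ² → ℝ and every (t,x), F*[u, φ∘u](t,x) = −φ'(u(t,x))·(u_t(t,x) + f(t,x,u(t,x),u_x(t,x))); that is, the equation u_t + f = 0 is quasi-self-adjoint with substitution v = φ(u). -/
noncomputable section

/-- Smoothness of a function of two real variables. -/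
def Smooth2 (g : ℝ → ℝ → ℝ) : Prop :=
  ContDiff ℝ (⊤ : ℕ∞) (fun q : ℝ × ℝ => g q.1 q.2)

/-- Smoothness of a function of four real variables. -/
def Smooth4 (f : ℝ → ℝ → ℝ → ℝ → ℝ) : Prop :=
  ContDiff ℝ (⊤ : ℕ∞) (fun q : ℝ × ℝ × ℝ × ℝ => f q.1 q.2.1 q.2.2.1 q.2.2.2)

def fXP (f : ℝ → ℝ → ℝ → ℝ → ℝ) (t x u p : ℝ) : ℝ := deriv (fun s => fP f t s u p) x
def fUP (f : ℝ → ℝ → ℝ → ℝ → ℝ) (t x u p : ℝ) : ℝ := deriv (fun s => fP f t x s p) u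
def fPP (f : ℝ → ℝ → ℝ → ℝ → ℝ) (t x u p : ℝ) : ℝ := deriv (fun s => fP f t x u s) p

/-- The adjoint expression F*[u,v](t,x) of the equation u_t + f(t,x,u,u_x) = 0:
F*[u,v] = −v_t − f_p·v_x + (f_u − f_{xp} − u_x·f_{up})·v − f_{pp}·u_{xx}·v,
with the derivatives of f evaluated at (t, x, u(t,x), u_x(t,x)). -/
def adjointExpr (f : ℝ → ℝ → ℝ → ℝ → ℝ) (u v : ℝ → ℝ → ℝ) (t x : ℝ) : ℝ :=
  -(deriv (fun s => v s x) t)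
  - fP f t x (u t x) (deriv (fun s => u t s) x) * deriv (fun s => v t s) x
  + (fU f t x (u t x) (deriv (fun s => u t s) x)
      - fXP f t x (u t x) (deriv (fun s => u t s) x)
      - deriv (fun s => u t s) x * fUP f t x (u t x) (deriv (fun s => u t s) x)) * v t x
  - fPP f t x (u t x) (deriv (fun s => u t s) x)
      * deriv (fun s => deriv (fun r => u t r) s) x * v t x

/-- Partial derivatives for functions of three real variables. -/
def px3 (g : ℝ → ℝ → ℝ → ℝ) (t x u : ℝ) : ℝ := deriv (fun s => g t s u) x
def pu3 (g : ℝ → ℝ → ℝ → ℝ) (t x u : ℝ) : ℝ := deriv (fun s => g t x s) u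

theorem quasi_self_adjointness_of_quasilinear_eq
    (α β : ℝ → ℝ → ℝ → ℝ) (hα : Smooth3 α) (hβ : Smooth3 β)
    (φ : ℝ → ℝ) (hφ : ContDiff ℝ (⊤ : ℕ∞) φ)
    (hcond : ∀ t x u : ℝ,
      pu3 β t x u * φ u + deriv φ u * β t x u = φ u * px3 α t x u)
    (u : ℝ → ℝ → ℝ) (hu : Smooth2 u) (t x : ℝ) :
    adjointExpr (fun t' x' u' p => α t' x' u' * p + β t' x' u') u
        (fun t' x' => φ (u t' x')) t x
      = -(deriv φ (u t x))
        * (deriv (fun s => u s x) t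
            + (α t x (u t x) * deriv (fun s => u t s) x + β t x (u t x))) := by

  classical
  set f : ℝ → ℝ → ℝ → ℝ → ℝ := fun t' x' u' p => α t' x' u' * p + β t' x' u' with hf
  -- fP is α
  have hfP : ∀ t' x' u' p, fP f t' x' u' p = α t' x' u' := by
    intro t' x' u' p
    have : HasDerivAt (fun s => α t' x' u' * s + β t' x' u') (α t' x' u') p := by
      simpa using ((hasDerivAt_id p).const_mul (α t' x' u')).add_const (β t' x' u')
    simpa [fP, hf] using this.deriv
  have hfPP : ∀ t' x' u' p, fPP f t' x' u' p = 0 := by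
    intro t' x' u' p
    have : (fun s => fP f t' x' u' s) = fun _ => α t' x' u' := funext fun s => hfP t' x' u' s
    simp [fPP, this]
  have hfXP : ∀ t' x' u' p, fXP f t' x' u' p = px3 α t' x' u' := by
    intro t' x' u' p
    have : (fun s => fP f t' s u' p) = fun s => α t' s u' := funext fun s => hfP t' s u' p
    simp [fXP, this, px3]
  have hfUP : ∀ t' x' u' p, fUP f t' x' u' p = pu3 α t' x' u' := by
    intro t' x' u' p
    have : (fun s => fP f t' x' s p) = fun s => α t' x' s := funext fun s => hfP t' x' s p
    simp [fUP, this, pu3]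
  -- differentiability facts
  have hαu : ∀ t' x', Differentiable ℝ (fun s => α t' x' s) := fun t' x' =>
    (hα.comp (contDiff_const.prodMk (contDiff_const.prodMk contDiff_id))).differentiable (by simp)
  have hβu : ∀ t' x', Differentiable ℝ (fun s => β t' x' s) := fun t' x' =>
    (hβ.comp (contDiff_const.prodMk (contDiff_const.prodMk contDiff_id))).differentiable (by simp)
  have hfU : ∀ t' x' u' p, fU f t' x' u' p = pu3 α t' x' u' * p + pu3 β t' x' u' := by
    intro t' x' u' p
    have h1 : HasDerivAt (fun s => α t' x' s * p + β t' x' s)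
        (pu3 α t' x' u' * p + pu3 β t' x' u') u' := by
      exact (((hαu t' x' u').hasDerivAt.mul_const p).add (hβu t' x' u').hasDerivAt)
    simpa [fU, hf, pu3] using h1.deriv
  -- derivatives of v = φ ∘ u
  have hut : Differentiable ℝ (fun s => u s x) :=
    (hu.comp (contDiff_id.prodMk contDiff_const)).differentiable (by simp)
  have hux : Differentiable ℝ (fun s => u t s) :=
    (hu.comp (contDiff_const.prodMk contDiff_id)).differentiable (by simp)
  have hvt : deriv (fun s => φ (u s x)) t = deriv φ (u t x) * deriv (fun s => u s x) t := by
    have := deriv_comp t ((hφ.differentiable (by simp)) (u t x)) (hut t)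
    simpa [Function.comp_def] using this
  have hvx : deriv (fun s => φ (u t s)) x = deriv φ (u t x) * deriv (fun s => u t s) x := by
    have := deriv_comp x ((hφ.differentiable (by simp)) (u t x)) (hux x)
    simpa [Function.comp_def] using this
  have hc := hcond t x (u t x)
  simp only [adjointExpr, hfP, hfPP, hfXP, hfUP, hfU, hvt, hvx]
  ring_nf
  linear_combination hc
end
end

section
/- Let f = f(t,x,u,p) be a smooth function of four real variables and let φ : ℝ → ℝ be smooth with φ'(s) ≠ 0 for all s. Suppose that for every smooth u : ℝ² → ℝ and every (t,x), F*[u, φ∘u](t,x) = −φ'(u(t,x))·(u_t(t,x) + f(t,x,u(t,x),u_x(t,x))). Then for all (t,x,u,p) ∈ ℝ⁴: f_{pp}(t,x,u,p) = 0 and φ(u)·f_u − φ'(u)·p·f_p − φ(u)·p·f_{up} − φ(u)·f_{xp} + φ'(u)·f = 0, where f and its partial derivatives are evaluated at (t,x,u,p). -/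
noncomputable section

theorem quasi_self_adjointness_necessary_conditions
    (f : ℝ → ℝ → ℝ → ℝ → ℝ) (hf : Smooth4 f)
    (φ : ℝ → ℝ) (hφ : ContDiff ℝ (⊤ : ℕ∞) φ) (hφ' : ∀ s : ℝ, deriv φ s ≠ 0)
    (hadj : ∀ u : ℝ → ℝ → ℝ, Smooth2 u → ∀ t x : ℝ,
      adjointExpr f u (fun t' x' => φ (u t' x')) t x
        = -(deriv φ (u t x))
          * (deriv (fun s => u s x) t + f t x (u t x) (deriv (fun s => u t s) x))) :
    ∀ t x u p : ℝ,
      fPP f t x u p = 0 ∧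
      φ u * fU f t x u p - deriv φ u * p * fP f t x u p
        - φ u * p * fUP f t x u p - φ u * fXP f t x u p
        + deriv φ u * f t x u p = 0 := by

  -- Auxiliary: smoothness of partial derivative in the second slot
  have aux : ∀ G : ℝ × ℝ → ℝ, ContDiff ℝ (⊤ : ℕ∞) G →
      ContDiff ℝ (⊤ : ℕ∞) (fun q : ℝ × ℝ => deriv (fun s => G (q.1, s)) q.2) := by
    intro G hG
    have key : ∀ q : ℝ × ℝ, deriv (fun s => G (q.1, s)) q.2 = fderiv ℝ G q (0, 1) := by
      intro q
      have h1 : HasDerivAt (fun s : ℝ => ((q.1, s) : ℝ × ℝ)) (0, 1) q.2 :=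
        HasDerivAt.prodMk (hasDerivAt_const q.2 q.1) (hasDerivAt_id q.2)
      have h2 : HasFDerivAt G (fderiv ℝ G q) q :=
        (hG.differentiable (by simp) q).hasFDerivAt
      exact (h2.comp_hasDerivAt q.2 h1).deriv
    have e : (fun q : ℝ × ℝ => deriv (fun s => G (q.1, s)) q.2)
        = fun q => fderiv ℝ G q (0, 1) := funext key
    rw [e]
    exact (hG.fderiv_right (by simp)).clm_apply contDiff_const
  -- φ is injective
  have hinj : Function.Injective φ := by
    have hcont : Continuous (deriv φ) := hφ.continuous_deriv (by simp)
    by_cases hpos : ∀ s, 0 < deriv φ s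
    · exact (strictMono_of_deriv_pos hpos).injective
    · push_neg at hpos
      obtain ⟨b, hb⟩ := hpos
      have hb' : deriv φ b < 0 := lt_of_le_of_ne hb (hφ' b)
      have hneg : ∀ s, deriv φ s < 0 := by
        intro s
        rcases lt_or_ge (deriv φ s) 0 with h | h
        · exact h
        · exfalso
          have hs : 0 < deriv φ s := lt_of_le_of_ne h (Ne.symm (hφ' s))
          have h0 : (0:ℝ) ∈ Set.uIcc (deriv φ s) (deriv φ b) :=
            Set.mem_uIcc.2 (Or.inr ⟨hb'.le, hs.le⟩)
          obtain ⟨c, _, hc⟩ :=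
            intermediate_value_uIcc (f := deriv φ) (a := s) (b := b) hcont.continuousOn h0
          exact hφ' c hc
      exact (strictAnti_of_deriv_neg hneg).injective
  intro t x u p
  -- smoothness / continuity of fPP in (u,p)
  have hG : ContDiff ℝ (⊤ : ℕ∞) (fun q : ℝ × ℝ => f t x q.1 q.2) := by
    have hemb : ContDiff ℝ (⊤ : ℕ∞) (fun q : ℝ × ℝ => ((t, x, q.1, q.2) : ℝ × ℝ × ℝ × ℝ)) :=
      contDiff_const.prodMk (contDiff_const.prodMk (contDiff_fst.prodMk contDiff_snd))
    exact hf.comp hemb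
  have hP1 : ContDiff ℝ (⊤ : ℕ∞) (fun q : ℝ × ℝ => fP f t x q.1 q.2) :=
    aux (fun q : ℝ × ℝ => f t x q.1 q.2) hG
  have hP2 : ContDiff ℝ (⊤ : ℕ∞) (fun q : ℝ × ℝ => fPP f t x q.1 q.2) :=
    aux (fun q : ℝ × ℝ => fP f t x q.1 q.2) hP1
  have hcontPP : Continuous (fun u' : ℝ => fPP f t x u' p) :=
    hP2.continuous.comp (continuous_id.prodMk continuous_const)
  -- key identity from the test functions
  have key : ∀ u' p' a : ℝ,
      φ u' * fU f t x u' p' - deriv φ u' * p' * fP f t x u' p'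
        - φ u' * p' * fUP f t x u' p' - φ u' * fXP f t x u' p'
        + deriv φ u' * f t x u' p'
      = 2 * a * (φ u' * fPP f t x u' p') := by
    intro u' p' a
    have hsm : Smooth2 (fun (_ : ℝ) s => u' + p' * (s - x) + a * (s - x) ^ 2) := by
      unfold Smooth2
      fun_prop
    have hw : ∀ s : ℝ, HasDerivAt (fun r => u' + p' * (r - x) + a * (r - x) ^ 2)
        (p' + 2 * a * (s - x)) s := by
      intro s
      have h := ((hasDerivAt_const s u').add
          (((hasDerivAt_id s).sub_const x).const_mul p')).add
        ((((hasDerivAt_id s).sub_const x).pow 2).const_mul a)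
      simp only [id_eq] at h
      refine h.congr_deriv ?_
      rw [show (2:ℕ) - 1 = 1 from rfl]
      push_cast
      ring
    have h1 : deriv (fun s => u' + p' * (s - x) + a * (s - x) ^ 2) x = p' := by
      simpa using (hw x).deriv
    have h2 : deriv (fun s => deriv (fun r => u' + p' * (r - x) + a * (r - x) ^ 2) s) x
        = 2 * a := by
      have e : (fun s => deriv (fun r => u' + p' * (r - x) + a * (r - x) ^ 2) s)
          = fun s => p' + 2 * a * (s - x) := funext fun s => (hw s).deriv
      rw [e]
      have h := (((hasDerivAt_id x).sub_const x).const_mul (2 * a)).const_add p'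
      simpa using h.deriv
    have h5 : deriv (fun s => φ (u' + p' * (s - x) + a * (s - x) ^ 2)) x
        = deriv φ u' * p' := by
      have hc : HasDerivAt φ (deriv φ (u' + p' * (x - x) + a * (x - x) ^ 2))
          (u' + p' * (x - x) + a * (x - x) ^ 2) :=
        (hφ.differentiable (by simp) _).hasDerivAt
      have h := hc.comp x (hw x)
      simpa [Function.comp_def] using h.deriv
    have hval : u' + p' * (x - x) + a * (x - x) ^ 2 = u' := by ring
    have H := hadj (fun (_ : ℝ) s => u' + p' * (s - x) + a * (s - x) ^ 2) hsm t x
    simp only [adjointExpr] at H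
    rw [h1, h2, h5, hval] at H
    simp only [deriv_const'] at H
    linear_combination H
  constructor
  · -- fPP = 0
    have hkey2 : ∀ u' : ℝ, φ u' * fPP f t x u' p = 0 := by
      intro u'
      have ha := key u' p (1/2)
      have h0 := key u' p 0
      linarith
    by_cases hz : φ u = 0
    · have hne : ∀ u' : ℝ, u' ≠ u → fPP f t x u' p = 0 := by
        intro u' hu'
        have hφne : φ u' ≠ 0 := fun h => hu' (hinj (h.trans hz.symm))
        exact (mul_eq_zero.1 (hkey2 u')).resolve_left hφne
      have ht1 : Filter.Tendsto (fun u' => fPP f t x u' p) (nhdsWithin u {u}ᶜ)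
          (nhds (fPP f t x u p)) :=
        (hcontPP.tendsto u).mono_left nhdsWithin_le_nhds
      have ht2 : Filter.Tendsto (fun u' => fPP f t x u' p) (nhdsWithin u {u}ᶜ)
          (nhds 0) := by
        apply Filter.Tendsto.congr' _ tendsto_const_nhds
        filter_upwards [self_mem_nhdsWithin] with u' hu'
        exact (hne u' hu').symm
      exact tendsto_nhds_unique ht1 ht2
    · exact (mul_eq_zero.1 (hkey2 u)).resolve_left hz
  · have h0 := key u p 0
    linarith
end
end

section
/- Let f = f(t,x,u,p) be a smooth function of four real variables. The equation u_t + f(t,x,u,u_x) = 0 is self-adjoint, meaning that for every smooth u : ℝ² → ℝ and every (t,x) one has F*[u, u](t,x) = −(u_t(t,x) + f(t,x,u(t,x),u_x(t,x))), if and only if there exist smooth functions α, β : ℝ³ → ℝ of (t,x,u) such that f(t,x,u,p) = α(t,x,u)·p + β(t,x,u) for all (t,x,u,p) and u·β_u(t,x,u) + β(t,x,u) = u·α_x(t,x,u) for all (t,x,u). -/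
noncomputable section

lemma lineDeriv_hasDerivAt {E : Type*} [NormedAddCommGroup E] [NormedSpace ℝ E]
    {G : E → ℝ} (hG : Differentiable ℝ G) (a v : E) (s : ℝ) :
    HasDerivAt (fun r : ℝ => G (a + r • v)) (fderiv ℝ G (a + s • v) v) s := by
  have h1 : HasDerivAt (fun r : ℝ => a + r • v) v s := by
    simpa using ((hasDerivAt_id s).smul_const v).const_add a
  exact (hG (a + s • v)).hasFDerivAt.comp_hasDerivAt s h1

lemma slot2 {G : ℝ×ℝ×ℝ×ℝ → ℝ} (hG : Differentiable ℝ G) (t x u p : ℝ) :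
    HasDerivAt (fun s => G (t,s,u,p)) (fderiv ℝ G (t,x,u,p) (0,1,0,0)) x := by
  have heq : ∀ s : ℝ, ((t,(0:ℝ),u,p) : ℝ×ℝ×ℝ×ℝ) + s • ((0,1,0,0) : ℝ×ℝ×ℝ×ℝ) = (t,s,u,p) := by
    intro s; simp [Prod.ext_iff]
  have := lineDeriv_hasDerivAt hG ((t,0,u,p) : ℝ×ℝ×ℝ×ℝ) ((0,1,0,0) : ℝ×ℝ×ℝ×ℝ) x
  simpa only [heq] using this

lemma slot3 {G : ℝ×ℝ×ℝ×ℝ → ℝ} (hG : Differentiable ℝ G) (t x u p : ℝ) :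
    HasDerivAt (fun s => G (t,x,s,p)) (fderiv ℝ G (t,x,u,p) (0,0,1,0)) u := by
  have heq : ∀ s : ℝ, ((t,x,(0:ℝ),p) : ℝ×ℝ×ℝ×ℝ) + s • ((0,0,1,0) : ℝ×ℝ×ℝ×ℝ) = (t,x,s,p) := by
    intro s; simp [Prod.ext_iff]
  have := lineDeriv_hasDerivAt hG ((t,x,0,p) : ℝ×ℝ×ℝ×ℝ) ((0,0,1,0) : ℝ×ℝ×ℝ×ℝ) u
  simpa only [heq] using this

lemma slot4 {G : ℝ×ℝ×ℝ×ℝ → ℝ} (hG : Differentiable ℝ G) (t x u p : ℝ) :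
    HasDerivAt (fun s => G (t,x,u,s)) (fderiv ℝ G (t,x,u,p) (0,0,0,1)) p := by
  have heq : ∀ s : ℝ, ((t,x,u,(0:ℝ)) : ℝ×ℝ×ℝ×ℝ) + s • ((0,0,0,1) : ℝ×ℝ×ℝ×ℝ) = (t,x,u,s) := by
    intro s; simp [Prod.ext_iff]
  have := lineDeriv_hasDerivAt hG ((t,x,u,0) : ℝ×ℝ×ℝ×ℝ) ((0,0,0,1) : ℝ×ℝ×ℝ×ℝ) p
  simpa only [heq] using this

theorem self_adjointness_characterization
    (f : ℝ → ℝ → ℝ → ℝ → ℝ) (hf : Smooth4 f) :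
    (∀ u : ℝ → ℝ → ℝ, Smooth2 u → ∀ t x : ℝ,
      adjointExpr f u u t x
        = -(deriv (fun s => u s x) t + f t x (u t x) (deriv (fun s => u t s) x)))
    ↔
    (∃ α β : ℝ → ℝ → ℝ → ℝ, Smooth3 α ∧ Smooth3 β ∧
      (∀ t x u p : ℝ, f t x u p = α t x u * p + β t x u) ∧
      (∀ t x u : ℝ, u * pu3 β t x u + β t x u = u * px3 α t x u)) := by
  constructor
  · intro H
    have hf' : ContDiff ℝ (⊤ : ℕ∞) (fun q : ℝ×ℝ×ℝ×ℝ => f q.1 q.2.1 q.2.2.1 q.2.2.2) := hf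
    set F : ℝ×ℝ×ℝ×ℝ → ℝ := fun q => f q.1 q.2.1 q.2.2.1 q.2.2.2 with hFdef
    have hFd : Differentiable ℝ F := hf'.differentiable (by simp)
    have fP_eq : ∀ t x u p : ℝ, fP f t x u p = fderiv ℝ F (t,x,u,p) (0,0,0,1) :=
      fun t x u p => (slot4 hFd t x u p).deriv
    have fU_eq : ∀ t x u p : ℝ, fU f t x u p = fderiv ℝ F (t,x,u,p) (0,0,1,0) :=
      fun t x u p => (slot3 hFd t x u p).deriv
    set G : ℝ×ℝ×ℝ×ℝ → ℝ := fun q => fderiv ℝ F q (0,0,0,1) with hGdef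
    have hG : ContDiff ℝ (⊤ : ℕ∞) G := (hf'.fderiv_right (by simp)).clm_apply contDiff_const
    have hGd : Differentiable ℝ G := hG.differentiable (by simp)
    have fP_G : ∀ t x u p : ℝ, fP f t x u p = G (t,x,u,p) := fP_eq
    have fXP_eq : ∀ t x u p : ℝ, fXP f t x u p = fderiv ℝ G (t,x,u,p) (0,1,0,0) := by
      intro t x u p
      have h1 : (fun s => fP f t s u p) = fun s => G (t,s,u,p) := funext fun s => fP_G t s u p
      show deriv (fun s => fP f t s u p) x = _
      rw [h1]; exact (slot2 hGd t x u p).deriv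
    have fUP_eq : ∀ t x u p : ℝ, fUP f t x u p = fderiv ℝ G (t,x,u,p) (0,0,1,0) := by
      intro t x u p
      have h1 : (fun s => fP f t x s p) = fun s => G (t,x,s,p) := funext fun s => fP_G t x s p
      show deriv (fun s => fP f t x s p) u = _
      rw [h1]; exact (slot3 hGd t x u p).deriv
    have fPP_eq : ∀ t x u p : ℝ, fPP f t x u p = fderiv ℝ G (t,x,u,p) (0,0,0,1) := by
      intro t x u p
      have h1 : (fun s => fP f t x u s) = fun s => G (t,x,u,s) := funext fun s => fP_G t x u s
      show deriv (fun s => fP f t x u s) p = _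
      rw [h1]; exact (slot4 hGd t x u p).deriv
    -- Step A : the pointwise identity obtained from quadratic test functions
    have IdA : ∀ t x U P Q : ℝ, f t x U P
        = fP f t x U P * P - (fU f t x U P - fXP f t x U P - P * fUP f t x U P) * U
          + fPP f t x U P * Q * U := by
      intro t x U P Q
      set u : ℝ → ℝ → ℝ := fun _ y => U + P * (y - x) + Q/2 * (y - x)^2 with hu
      have hus : Smooth2 u := by
        unfold Smooth2; simp only [hu]; fun_prop
      have hval : u t x = U := by simp [hu]
      have hd1 : ∀ y : ℝ, HasDerivAt (fun s => u t s) (P + Q * (y - x)) y := by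
        intro y
        have h1 : HasDerivAt (fun s : ℝ => U + P * (s - x) + Q/2 * (s - x)^2)
            (0 + P * 1 + Q/2 * ((2:ℕ) * (y - x)^(2-1) * 1)) y :=
          ((hasDerivAt_const y U).add (((hasDerivAt_id y).sub_const x).const_mul P)).add
            ((((hasDerivAt_id y).sub_const x).pow 2).const_mul (Q/2))
        have h2 : HasDerivAt (fun s => u t s) (0 + P * 1 + Q/2 * ((2:ℕ) * (y - x)^(2-1) * 1)) y := by
          simpa only [hu] using h1
        convert h2 using 1; push_cast; ring
      have hderiv1 : deriv (fun s => u t s) x = P := by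
        have := (hd1 x).deriv; simpa using this
      have hderivfun : (fun s => deriv (fun r => u t r) s) = fun s => P + Q * (s - x) :=
        funext fun s => (hd1 s).deriv
      have hderiv2 : deriv (fun s => deriv (fun r => u t r) s) x = Q := by
        rw [hderivfun]
        have h3 : HasDerivAt (fun s : ℝ => P + Q * (s - x)) Q x := by
          have h4 := (hasDerivAt_const x P).add (((hasDerivAt_id x).sub_const x).const_mul Q)
          rw [zero_add, mul_one] at h4; exact h4
        exact h3.deriv
      have hderivt : deriv (fun s => u s x) t = 0 := by
        simp [hu]
      have hH := H u hus t x
      unfold adjointExpr at hH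
      rw [hval, hderiv1, hderiv2, hderivt] at hH
      linarith
    -- f_pp vanishes identically
    have hPPzero : ∀ t x U P : ℝ, fPP f t x U P = 0 := by
      intro t x U P
      have h1 : ∀ V : ℝ, fPP f t x V P * V = 0 := by
        intro V
        have a := IdA t x V P 1
        have b := IdA t x V P 0
        linear_combination b - a
      have hcont : Continuous (fun V : ℝ => fPP f t x V P) := by
        have heq : (fun V : ℝ => fPP f t x V P) = fun V => fderiv ℝ G (t,x,V,P) (0,0,0,1) :=
          funext fun V => fPP_eq t x V P
        rw [heq]
        have hG3 : ContDiff ℝ (⊤ : ℕ∞) (fun q : ℝ×ℝ×ℝ×ℝ => fderiv ℝ G q (0,0,0,1)) :=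
          (hG.fderiv_right (by simp)).clm_apply contDiff_const
        have hG2 : Continuous (fun q : ℝ×ℝ×ℝ×ℝ => fderiv ℝ G q (0,0,0,1)) := hG3.continuous
        exact hG2.comp (by fun_prop)
      have hfun : (fun V : ℝ => fPP f t x V P) = fun _ => 0 := by
        apply Continuous.ext_on (dense_compl_singleton (0:ℝ)) hcont continuous_const
        intro V hV
        have hV0 : V ≠ 0 := hV
        have h2 := h1 V
        exact (mul_eq_zero.mp h2).resolve_right hV0
      exact congrFun hfun U
    -- f is affine in p
    have haff : ∀ t x U p : ℝ, f t x U p = fP f t x U 0 * p + f t x U 0 := by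
      intro t x U p
      have hfPconst : ∀ q : ℝ, fP f t x U q = fP f t x U 0 := by
        have hder : ∀ q : ℝ, HasDerivAt (fun s => fP f t x U s) 0 q := by
          intro q
          have h1 : (fun s => fP f t x U s) = fun s => G (t,x,U,s) :=
            funext fun s => fP_G t x U s
          rw [h1]
          have h2 := slot4 hGd t x U q
          have h3 : fderiv ℝ G (t,x,U,q) ((0:ℝ),(0:ℝ),(0:ℝ),(1:ℝ)) = 0 := by
            have h4 := hPPzero t x U q; rw [fPP_eq] at h4; exact h4
          rwa [h3] at h2
        intro q
        exact is_const_of_deriv_eq_zero (fun y => (hder y).differentiableAt)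
          (fun y => (hder y).deriv) q 0
      have hder2 : ∀ q : ℝ, HasDerivAt (fun s => f t x U s - fP f t x U 0 * s) 0 q := by
        intro q
        have h1 : HasDerivAt (fun s => f t x U s) (fP f t x U 0) q := by
          have h5 := slot4 hFd t x U q
          have h6 : fderiv ℝ F (t,x,U,q) ((0:ℝ),(0:ℝ),(0:ℝ),(1:ℝ)) = fP f t x U 0 := by
            rw [← fP_eq]; exact hfPconst q
          rwa [h6] at h5
        have h8 := h1.sub ((hasDerivAt_id q).const_mul (fP f t x U 0))
        rw [mul_one, sub_self] at h8; exact h8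
      have h7 := is_const_of_deriv_eq_zero (fun y => (hder2 y).differentiableAt)
        (fun y => (hder2 y).deriv) p 0
      simp only [mul_zero, sub_zero] at h7
      linarith
    refine ⟨fun t x u => fP f t x u 0, fun t x u => f t x u 0, ?_, ?_, ?_, ?_⟩
    · show ContDiff ℝ (⊤ : ℕ∞) (fun q : ℝ×ℝ×ℝ => fP f q.1 q.2.1 q.2.2 0)
      have heq : (fun q : ℝ×ℝ×ℝ => fP f q.1 q.2.1 q.2.2 0)
          = fun q : ℝ×ℝ×ℝ => G (q.1, q.2.1, q.2.2, 0) :=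
        funext fun q => fP_G q.1 q.2.1 q.2.2 0
      rw [heq]
      exact hG.comp (by fun_prop)
    · show ContDiff ℝ (⊤ : ℕ∞) (fun q : ℝ×ℝ×ℝ => f q.1 q.2.1 q.2.2 0)
      have heq : (fun q : ℝ×ℝ×ℝ => f q.1 q.2.1 q.2.2 0)
          = fun q : ℝ×ℝ×ℝ => F (q.1, q.2.1, q.2.2, 0) := rfl
      rw [heq]
      exact hf'.comp (by fun_prop)
    · intro t x u p; exact haff t x u p
    · intro t x U
      have h := IdA t x U 0 0
      have e1 : pu3 (fun t x u => f t x u 0) t x U = fU f t x U 0 := rfl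
      have e2 : px3 (fun t x u => fP f t x u 0) t x U = fXP f t x U 0 := rfl
      rw [e1, e2]
      linear_combination h
  · rintro ⟨α, β, hα, hβ, hform, hrel⟩
    intro u hu t x
    have hαd : Differentiable ℝ (fun q : ℝ×ℝ×ℝ => α q.1 q.2.1 q.2.2) :=
      (hα : ContDiff ℝ (⊤ : ℕ∞) _).differentiable (by simp)
    have hβd : Differentiable ℝ (fun q : ℝ×ℝ×ℝ => β q.1 q.2.1 q.2.2) :=
      (hβ : ContDiff ℝ (⊤ : ℕ∞) _).differentiable (by simp)
    have hαu : ∀ a b v : ℝ, HasDerivAt (fun s => α a b s) (pu3 α a b v) v := by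
      intro a b v
      have hdiff : DifferentiableAt ℝ (fun s : ℝ => α a b s) v := by
        have := (hαd ((a,b,v) : ℝ×ℝ×ℝ)).comp v
          (show DifferentiableAt ℝ (fun s : ℝ => ((a,b,s) : ℝ×ℝ×ℝ)) v by fun_prop)
        exact this
      exact hdiff.hasDerivAt
    have hβu : ∀ a b v : ℝ, HasDerivAt (fun s => β a b s) (pu3 β a b v) v := by
      intro a b v
      have hdiff : DifferentiableAt ℝ (fun s : ℝ => β a b s) v := by
        have := (hβd ((a,b,v) : ℝ×ℝ×ℝ)).comp v
          (show DifferentiableAt ℝ (fun s : ℝ => ((a,b,s) : ℝ×ℝ×ℝ)) v by fun_prop)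
        exact this
      exact hdiff.hasDerivAt
    have hfP : ∀ a b v p : ℝ, fP f a b v p = α a b v := by
      intro a b v p
      show deriv (fun s => f a b v s) p = _
      have h1 : (fun s => f a b v s) = fun s => α a b v * s + β a b v :=
        funext fun s => hform a b v s
      rw [h1]
      have h2 : HasDerivAt (fun s : ℝ => α a b v * s + β a b v) (α a b v) p := by
        simpa using ((hasDerivAt_id p).const_mul (α a b v)).add_const (β a b v)
      exact h2.deriv
    have hfXP : ∀ a b v p : ℝ, fXP f a b v p = px3 α a b v := by
      intro a b v p
      show deriv (fun s => fP f a s v p) b = _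
      have h1 : (fun s => fP f a s v p) = fun s => α a s v := funext fun s => hfP a s v p
      rw [h1]; rfl
    have hfUP : ∀ a b v p : ℝ, fUP f a b v p = pu3 α a b v := by
      intro a b v p
      show deriv (fun s => fP f a b s p) v = _
      have h1 : (fun s => fP f a b s p) = fun s => α a b s := funext fun s => hfP a b s p
      rw [h1]; rfl
    have hfPP : ∀ a b v p : ℝ, fPP f a b v p = 0 := by
      intro a b v p
      show deriv (fun s => fP f a b v s) p = 0
      have h1 : (fun s => fP f a b v s) = fun _ => α a b v := funext fun s => hfP a b v s
      rw [h1]; simp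
    have hfU : ∀ a b v p : ℝ, fU f a b v p = pu3 α a b v * p + pu3 β a b v := by
      intro a b v p
      show deriv (fun s => f a b s p) v = _
      have h1 : (fun s => f a b s p) = fun s => α a b s * p + β a b s :=
        funext fun s => hform a b s p
      rw [h1]
      exact (((hαu a b v).mul_const p).add (hβu a b v)).deriv
    unfold adjointExpr
    rw [hfP, hfXP, hfUP, hfPP, hfU, hform t x (u t x)]
    have h := hrel t x (u t x)
    linear_combination h
end
end

section
/- Let α, β : ℝ³ → ℝ be smooth functions of (t,x,u) with u·β_u(t,x,u) + β(t,x,u) = u·α_x(t,x,u) for all (t,x,u), let τ, ξ, η : ℝ³ → ℝ be smooth functions of (t,x,u) satisfying for all (t,x,u): (D1) η_t + β(τ_t − η_u) + β_x ξ + β_t τ + β_u η − β² τ_u + α η_x + α β τ_x = 0 and (D2) −ξ_t + α τ_t + β ξ_u + α_x ξ + α_t τ + α_u η − α β τ_u − α ξ_x + α² τ_x = 0, and let u : ℝ² → ℝ be a smooth solution of u_t + α(t,x,u)·u_x + β(t,x,u) = 0. Then ∂_t{[η + τ·β + (τ·α − ξ)·u_x]·u} + ∂_x{[η·α + ξ·β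 − (τ·α − ξ)·u_t]·u} = 0 at every (t,x), where α, β, τ, ξ, η are evaluated at (t,x,u(t,x)). -/
noncomputable section

/-- Partial derivatives for functions of three real variables (t,x,u). -/
def pt3 (g : ℝ → ℝ → ℝ → ℝ) (t x u : ℝ) : ℝ := deriv (fun s => g s x u) t
lemma hasDerivAt_u_t (u : ℝ → ℝ → ℝ) (hu : Smooth2 u) (t x : ℝ) :
    HasDerivAt (fun s => u s x) (deriv (fun s => u s x) t) t := by
  have hF : Differentiable ℝ (fun q : ℝ × ℝ => u q.1 q.2) := hu.differentiable (by simp)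
  have : DifferentiableAt ℝ (fun s => u s x) t :=
    (hF.comp (differentiable_id.prodMk (differentiable_const x))).differentiableAt
  exact this.hasDerivAt

lemma hasDerivAt_u_x (u : ℝ → ℝ → ℝ) (hu : Smooth2 u) (t x : ℝ) :
    HasDerivAt (fun s => u t s) (deriv (fun s => u t s) x) x := by
  have hF : Differentiable ℝ (fun q : ℝ × ℝ => u q.1 q.2) := hu.differentiable (by simp)
  have : DifferentiableAt ℝ (fun s => u t s) x :=
    (hF.comp ((differentiable_const t).prodMk differentiable_id)).differentiableAt
  exact this.hasDerivAt

lemma chain_t (g : ℝ → ℝ → ℝ → ℝ) (hg : Smooth3 g) (u : ℝ → ℝ → ℝ) (hu : Smooth2 u)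
    (t x : ℝ) :
    HasDerivAt (fun s => g s x (u s x))
      (pt3 g t x (u t x) + pu3 g t x (u t x) * deriv (fun s => u s x) t) t := by
  set G := fun q : ℝ × ℝ × ℝ => g q.1 q.2.1 q.2.2 with hG
  have hGd : ∀ y, HasFDerivAt G (fderiv ℝ G y) y :=
    fun y => (hg.differentiable (by simp) y).hasFDerivAt
  have hus := hasDerivAt_u_t u hu t x
  have hc : HasDerivAt (fun s => ((s, x, u s x) : ℝ × ℝ × ℝ))
      (1, 0, deriv (fun s => u s x) t) t :=
    (hasDerivAt_id t).prodMk ((hasDerivAt_const t x).prodMk hus)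
  have hcomp := (hGd (t, x, u t x)).comp_hasDerivAt t hc
  have e1 : pt3 g t x (u t x) = fderiv ℝ G (t, x, u t x) (1, 0, 0) := by
    have hc1 : HasDerivAt (fun s => ((s, x, u t x) : ℝ × ℝ × ℝ)) (1, 0, 0) t :=
      (hasDerivAt_id t).prodMk ((hasDerivAt_const t x).prodMk (hasDerivAt_const t (u t x)))
    have h := (hGd (t, x, u t x)).comp_hasDerivAt t hc1
    have h' : HasDerivAt (fun s => g s x (u t x)) (fderiv ℝ G (t, x, u t x) (1, 0, 0)) t := h
    rw [pt3]; exact h'.deriv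
  have e2 : pu3 g t x (u t x) = fderiv ℝ G (t, x, u t x) (0, 0, 1) := by
    have hc1 : HasDerivAt (fun s => ((t, x, s) : ℝ × ℝ × ℝ)) (0, 0, 1) (u t x) :=
      (hasDerivAt_const (u t x) t).prodMk ((hasDerivAt_const (u t x) x).prodMk (hasDerivAt_id (u t x)))
    have h := (hGd (t, x, u t x)).comp_hasDerivAt (u t x) hc1
    have h' : HasDerivAt (fun s => g t x s) (fderiv ℝ G (t, x, u t x) (0, 0, 1)) (u t x) := h
    rw [pu3]; exact h'.deriv
  have key : fderiv ℝ G (t, x, u t x) (1, 0, deriv (fun s => u s x) t)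
      = pt3 g t x (u t x) + pu3 g t x (u t x) * deriv (fun s => u s x) t := by
    rw [e1, e2]
    have hv : ((1 : ℝ), (0 : ℝ), deriv (fun s => u s x) t)
        = ((1 : ℝ), (0 : ℝ), (0 : ℝ)) + (deriv (fun s => u s x) t) • ((0 : ℝ), (0 : ℝ), (1 : ℝ)) := by
      simp [Prod.ext_iff]
    rw [hv, map_add, map_smul, smul_eq_mul, mul_comm]
  exact key ▸ hcomp

lemma chain_x (g : ℝ → ℝ → ℝ → ℝ) (hg : Smooth3 g) (u : ℝ → ℝ → ℝ) (hu : Smooth2 u)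
    (t x : ℝ) :
    HasDerivAt (fun s => g t s (u t s))
      (px3 g t x (u t x) + pu3 g t x (u t x) * deriv (fun s => u t s) x) x := by
  set G := fun q : ℝ × ℝ × ℝ => g q.1 q.2.1 q.2.2 with hG
  have hGd : ∀ y, HasFDerivAt G (fderiv ℝ G y) y :=
    fun y => (hg.differentiable (by simp) y).hasFDerivAt
  have hus := hasDerivAt_u_x u hu t x
  have hc : HasDerivAt (fun s => ((t, s, u t s) : ℝ × ℝ × ℝ))
      (0, 1, deriv (fun s => u t s) x) x :=
    (hasDerivAt_const x t).prodMk ((hasDerivAt_id x).prodMk hus)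
  have hcomp := (hGd (t, x, u t x)).comp_hasDerivAt x hc
  have e1 : px3 g t x (u t x) = fderiv ℝ G (t, x, u t x) (0, 1, 0) := by
    have hc1 : HasDerivAt (fun s => ((t, s, u t x) : ℝ × ℝ × ℝ)) (0, 1, 0) x :=
      (hasDerivAt_const x t).prodMk ((hasDerivAt_id x).prodMk (hasDerivAt_const x (u t x)))
    have h := (hGd (t, x, u t x)).comp_hasDerivAt x hc1
    have h' : HasDerivAt (fun s => g t s (u t x)) (fderiv ℝ G (t, x, u t x) (0, 1, 0)) x := h
    rw [px3]; exact h'.deriv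
  have e2 : pu3 g t x (u t x) = fderiv ℝ G (t, x, u t x) (0, 0, 1) := by
    have hc1 : HasDerivAt (fun s => ((t, x, s) : ℝ × ℝ × ℝ)) (0, 0, 1) (u t x) :=
      (hasDerivAt_const (u t x) t).prodMk ((hasDerivAt_const (u t x) x).prodMk (hasDerivAt_id (u t x)))
    have h := (hGd (t, x, u t x)).comp_hasDerivAt (u t x) hc1
    have h' : HasDerivAt (fun s => g t x s) (fderiv ℝ G (t, x, u t x) (0, 0, 1)) (u t x) := h
    rw [pu3]; exact h'.deriv
  have key : fderiv ℝ G (t, x, u t x) (0, 1, deriv (fun s => u t s) x)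
      = px3 g t x (u t x) + pu3 g t x (u t x) * deriv (fun s => u t s) x := by
    rw [e1, e2]
    have hv : ((0 : ℝ), (1 : ℝ), deriv (fun s => u t s) x)
        = ((0 : ℝ), (1 : ℝ), (0 : ℝ)) + (deriv (fun s => u t s) x) • ((0 : ℝ), (0 : ℝ), (1 : ℝ)) := by
      simp [Prod.ext_iff]
    rw [hv, map_add, map_smul, smul_eq_mul, mul_comm]
  exact key ▸ hcomp

lemma mixed_partials (u : ℝ → ℝ → ℝ) (hu : Smooth2 u) (t x : ℝ) :
    ∃ m : ℝ, HasDerivAt (fun s => deriv (fun r => u s r) x) m t ∧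
      HasDerivAt (fun s => deriv (fun r => u r s) t) m x := by
  set F := fun q : ℝ × ℝ => u q.1 q.2 with hF
  have hFd : ∀ y, HasFDerivAt F (fderiv ℝ F y) y :=
    fun y => (hu.differentiable (by simp) y).hasFDerivAt
  set G := fderiv ℝ F with hGdef
  have hG : ContDiff ℝ (⊤ : ℕ∞) G := hu.fderiv_right (by simp)
  have hGd : DifferentiableAt ℝ G (t, x) := (hG.differentiable (by simp)) (t, x)
  set H := fderiv ℝ G (t, x) with hHdef
  have hsym := second_derivative_symmetric hFd hGd.hasFDerivAt
    ((1 : ℝ), (0 : ℝ)) ((0 : ℝ), (1 : ℝ))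
  refine ⟨H (1, 0) (0, 1), ?_, ?_⟩
  · have hP : (fun s => deriv (fun r => u s r) x) = fun s => G (s, x) (0, 1) := by
      funext s
      exact ((hFd (s, x)).comp_hasDerivAt x ((hasDerivAt_const x s).prodMk (hasDerivAt_id x))).deriv
    rw [hP]
    have h1 : HasDerivAt (fun s => G (s, x)) (H (1, 0)) t :=
      hGd.hasFDerivAt.comp_hasDerivAt t ((hasDerivAt_id t).prodMk (hasDerivAt_const t x))
    have h2 := ((ContinuousLinearMap.apply ℝ ℝ ((0 : ℝ), (1 : ℝ))).hasFDerivAt).comp_hasDerivAt t h1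
    exact h2
  · have hQ : (fun s => deriv (fun r => u r s) t) = fun s => G (t, s) (1, 0) := by
      funext s
      exact ((hFd (t, s)).comp_hasDerivAt t ((hasDerivAt_id t).prodMk (hasDerivAt_const t s))).deriv
    rw [hQ]
    have h1 : HasDerivAt (fun s => G (t, s)) (H (0, 1)) x :=
      hGd.hasFDerivAt.comp_hasDerivAt x ((hasDerivAt_const x t).prodMk (hasDerivAt_id x))
    have h2 := ((ContinuousLinearMap.apply ℝ ℝ ((1 : ℝ), (0 : ℝ))).hasFDerivAt).comp_hasDerivAt x h1
    rw [hsym]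
    exact h2
theorem conservation_law_self_adjoint_quasilinear
    (α β : ℝ → ℝ → ℝ → ℝ) (hα : Smooth3 α) (hβ : Smooth3 β)
    (hsa : ∀ t x u : ℝ, u * pu3 β t x u + β t x u = u * px3 α t x u)
    (τ ξ η : ℝ → ℝ → ℝ → ℝ) (hτ : Smooth3 τ) (hξ : Smooth3 ξ) (hη : Smooth3 η)
    (hD1 : ∀ t x u : ℝ,
      pt3 η t x u + β t x u * (pt3 τ t x u - pu3 η t x u) + px3 β t x u * ξ t x u
        + pt3 β t x u * τ t x u + pu3 β t x u * η t x u - (β t x u) ^ 2 * pu3 τ t x u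
        + α t x u * px3 η t x u + α t x u * β t x u * px3 τ t x u = 0)
    (hD2 : ∀ t x u : ℝ,
      -(pt3 ξ t x u) + α t x u * pt3 τ t x u + β t x u * pu3 ξ t x u
        + px3 α t x u * ξ t x u + pt3 α t x u * τ t x u + pu3 α t x u * η t x u
        - α t x u * β t x u * pu3 τ t x u - α t x u * px3 ξ t x u
        + (α t x u) ^ 2 * px3 τ t x u = 0)
    (u : ℝ → ℝ → ℝ) (hu : Smooth2 u)
    (hueq : ∀ t x : ℝ,
      deriv (fun s => u s x) t + α t x (u t x) * deriv (fun s => u t s) x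
        + β t x (u t x) = 0) :
    ∀ t x : ℝ,
      deriv (fun s =>
        (η s x (u s x) + τ s x (u s x) * β s x (u s x)
          + (τ s x (u s x) * α s x (u s x) - ξ s x (u s x)) * deriv (fun r => u s r) x)
          * u s x) t
      + deriv (fun s =>
        (η t s (u t s) * α t s (u t s) + ξ t s (u t s) * β t s (u t s)
          - (τ t s (u t s) * α t s (u t s) - ξ t s (u t s)) * deriv (fun r => u r s) t)
          * u t s) x = 0 := by
  intro t x
  obtain ⟨m, hmt, hmx⟩ := mixed_partials u hu t x
  have hq := hasDerivAt_u_t u hu t x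
  have hp := hasDerivAt_u_x u hu t x
  have hαt := chain_t α hα u hu t x
  have hβt := chain_t β hβ u hu t x
  have hτt := chain_t τ hτ u hu t x
  have hξt := chain_t ξ hξ u hu t x
  have hηt := chain_t η hη u hu t x
  have hαx := chain_x α hα u hu t x
  have hβx := chain_x β hβ u hu t x
  have hτx := chain_x τ hτ u hu t x
  have hξx := chain_x ξ hξ u hu t x
  have hηx := chain_x η hη u hu t x
  have h1 : HasDerivAt (fun s =>
      (η s x (u s x) + τ s x (u s x) * β s x (u s x)
        + (τ s x (u s x) * α s x (u s x) - ξ s x (u s x)) * deriv (fun r => u s r) x)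
        * u s x)
      (((pt3 η t x (u t x) + pu3 η t x (u t x) * (deriv (fun s => u s x) t)) + ((pt3 τ t x (u t x) + pu3 τ t x (u t x) * (deriv (fun s => u s x) t)) * β t x (u t x) + τ t x (u t x) * (pt3 β t x (u t x) + pu3 β t x (u t x) * (deriv (fun s => u s x) t))) + ((((pt3 τ t x (u t x) + pu3 τ t x (u t x) * (deriv (fun s => u s x) t)) * α t x (u t x) + τ t x (u t x) * (pt3 α t x (u t x) + pu3 α t x (u t x) * (deriv (fun s => u s x) t))) - (pt3 ξ t x (u t x) + pu3 ξ t x (u t x) * (deriv (fun s => u s x) t))) * (deriv (fun s => u t s) x) + (τ t x (u t x) * α t x (u t x) - ξ t x (u t x)) * m)) * (u t x) + (η t x (u t x) + τ t x (u t x) * β t x (u t x) + (τ t x (u t x) * α t x (u t x) - ξ t x (u t x)) * (deriv (fun s => u t s) x)) * (deriv (fun s => u s x) t)) t :=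
    ((hηt.add (hτt.mul hβt)).add (((hτt.mul hαt).sub hξt).mul hmt)).mul hq
  have h2 : HasDerivAt (fun s =>
      (η t s (u t s) * α t s (u t s) + ξ t s (u t s) * β t s (u t s)
        - (τ t s (u t s) * α t s (u t s) - ξ t s (u t s)) * deriv (fun r => u r s) t)
        * u t s)
      (((((px3 η t x (u t x) + pu3 η t x (u t x) * (deriv (fun s => u t s) x)) * α t x (u t x) + η t x (u t x) * (px3 α t x (u t x) + pu3 α t x (u t x) * (deriv (fun s => u t s) x))) + ((px3 ξ t x (u t x) + pu3 ξ t x (u t x) * (deriv (fun s => u t s) x)) * β t x (u t x) + ξ t x (u t x) * (px3 β t x (u t x) + pu3 β t x (u t x) * (deriv (fun s => u t s) x)))) - ((((px3 τ t x (u t x) + pu3 τ t x (u t x) * (deriv (fun s => u t s) x)) * α t x (u t x) + τ t x (u t x) * (px3 α t x (u t x) + pu3 α t x (u t x) * (deriv (fun s => u t s) x))) - (px3 ξ t x (u t x) + pu3 ξ t x (u t x) * (deriv (fun s => u t s) x))) * (deriv (fun s => u s x) t) + (τ t x (u t x) * α t x (u t x) - ξ t x (u t x)) * m)) * (u t x)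 + (η t x (u t x) * α t x (u t x) + ξ t x (u t x) * β t x (u t x) - (τ t x (u t x) * α t x (u t x) - ξ t x (u t x)) * (deriv (fun s => u s x) t)) * (deriv (fun s => u t s) x)) x :=
    (((hηx.mul hαx).add (hξx.mul hβx)).sub (((hτx.mul hαx).sub hξx).mul hmx)).mul hp
  rw [h1.deriv, h2.deriv]
  linear_combination (u t x) * hD1 t x (u t x)
    + (u t x) * (deriv (fun s => u t s) x) * hD2 t x (u t x)
    - (η t x (u t x) + τ t x (u t x) * β t x (u t x) + (τ t x (u t x) * α t x (u t x) - ξ t x (u t x)) * (deriv (fun s => u t s) x)) * hsa t x (u t x)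
    + ((u t x) * ((pu3 η t x (u t x) + pu3 τ t x (u t x) * β t x (u t x) + τ t x (u t x) * pu3 β t x (u t x))
        - (px3 τ t x (u t x) * α t x (u t x) + τ t x (u t x) * px3 α t x (u t x) - px3 ξ t x (u t x)))
      + (η t x (u t x) + τ t x (u t x) * β t x (u t x))) * hueq t x
end
end

section
/- Let a : ℝ → ℝ be smooth and set f(t,x,u,p) = a(u)·p. Then smooth functions τ, ξ, η : ℝ³ → ℝ of (t,x,u) satisfy the determining equation of the inviscid Burgers equation u_t + a(u)·u_x = 0 for all (t,x,u,p) if and only if for all (t,x,u): η_t + a(u)·η_x = 0 and a'(u)·η + a(u)²·τ_x − ξ_t + a(u)·τ_t − a(u)·ξ_x = 0. -/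
noncomputable section

theorem determining_equations_inviscid_burgers
    (a : ℝ → ℝ) (ha : ContDiff ℝ (⊤ : ℕ∞) a)
    (τ ξ η : ℝ → ℝ → ℝ → ℝ) (hτ : Smooth3 τ) (hξ : Smooth3 ξ) (hη : Smooth3 η) :
    DetEq (fun _t _x u p => a u * p) τ ξ η ↔
      (∀ t x u : ℝ,
        (pt η t x u + a u * px η t x u = 0)
        ∧
        (deriv a u * η t x u + (a u) ^ 2 * px τ t x u - pt ξ t x u
          + a u * pt τ t x u - a u * px ξ t x u = 0)) := by
  have hfT : ∀ t x u p : ℝ, fT (fun _t _x u p => a u * p) t x u p = 0 := by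
    intro t x u p; simp [fT]
  have hfX : ∀ t x u p : ℝ, fX (fun _t _x u p => a u * p) t x u p = 0 := by
    intro t x u p; simp [fX]
  have hfU : ∀ t x u p : ℝ, fU (fun _t _x u p => a u * p) t x u p = deriv a u * p := by
    intro t x u p
    simp only [fU]
    exact deriv_mul_const ((ha.differentiable (by simp)) u) p
  have hfP : ∀ t x u p : ℝ, fP (fun _t _x u p => a u * p) t x u p = a u := by
    intro t x u p
    simp only [fP]
    simpa using ((hasDerivAt_id p).const_mul (a u)).deriv
  constructor
  · intro h t x u
    have h0 := h t x u 0
    have h1 := h t x u 1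
    simp only [hfT, hfX, hfU, hfP] at h0 h1
    refine ⟨by linear_combination h0, by linear_combination h1 - h0⟩
  · intro h t x u p
    obtain ⟨h1, h2⟩ := h t x u
    simp only [hfT, hfX, hfU, hfP]
    linear_combination h1 + p * h2
end
end

section
/- Let α : ℝ² → ℝ be a smooth function of (t,u), let τ, ξ : ℝ² → ℝ be smooth functions of (t,x), and let η : ℝ³ → ℝ be a smooth function of (t,x,u), such that for all (t,x,u): η_t + α(t,u)·η_x = 0 and −ξ_t + α·τ_t + α_t·τ + α_u·η − α·ξ_x + α²·τ_x = 0 (the determining equations of u_t + α(t,u)·u_x = 0 for the projectable generator X = τ∂_t + ξ∂_x + η∂_u). Then for every smooth λ : ℝ → ℝ, the coefficients λ(u)·τ(t,x), λ(u)·ξ(t,x), λ(u)·η(t,x,u) satisfy the determining equation of u_t + α(t,u)·u_x = 0 (with f(t,x,u,p) = α(t,u)·p) for all (t,x,u,p); that is, X_λ = λ(u)X is also a Lie point symmetry generator of that equation. -/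
noncomputable section

theorem lambda_multiple_of_projectable_symmetry
    (α : ℝ → ℝ → ℝ) (hα : Smooth2 α)
    (τ ξ : ℝ → ℝ → ℝ) (hτ : Smooth2 τ) (hξ : Smooth2 ξ)
    (η : ℝ → ℝ → ℝ → ℝ) (hη : Smooth3 η)
    (h1 : ∀ t x u : ℝ, pt η t x u + α t u * px η t x u = 0)
    (h2 : ∀ t x u : ℝ,
      -(deriv (fun s => ξ s x) t) + α t u * deriv (fun s => τ s x) t
        + deriv (fun s => α s u) t * τ t x + deriv (fun s => α t s) u * η t x u
        - α t u * deriv (fun s => ξ t s) x + (α t u) ^ 2 * deriv (fun s => τ t s) x = 0)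
    (lam : ℝ → ℝ) (hlam : ContDiff ℝ (⊤ : ℕ∞) lam) :
    DetEq (fun t _x u p => α t u * p)
      (fun t x u => lam u * τ t x) (fun t x u => lam u * ξ t x)
      (fun t x u => lam u * η t x u) := by

  have hτt : ∀ x t : ℝ, DifferentiableAt ℝ (fun s => τ s x) t := fun x t =>
    ((hτ.comp (contDiff_id.prodMk contDiff_const)).differentiable (by simp)).differentiableAt
  have hτx : ∀ t x : ℝ, DifferentiableAt ℝ (fun s => τ t s) x := fun t x =>
    ((hτ.comp (contDiff_const.prodMk contDiff_id)).differentiable (by simp)).differentiableAt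
  have hξt : ∀ x t : ℝ, DifferentiableAt ℝ (fun s => ξ s x) t := fun x t =>
    ((hξ.comp (contDiff_id.prodMk contDiff_const)).differentiable (by simp)).differentiableAt
  have hξx : ∀ t x : ℝ, DifferentiableAt ℝ (fun s => ξ t s) x := fun t x =>
    ((hξ.comp (contDiff_const.prodMk contDiff_id)).differentiable (by simp)).differentiableAt
  have hηt : ∀ x u t : ℝ, DifferentiableAt ℝ (fun s => η s x u) t := fun x u t =>
    ((hη.comp (contDiff_id.prodMk (contDiff_const.prodMk contDiff_const))).differentiable (by simp)).differentiableAt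
  have hηx : ∀ t u x : ℝ, DifferentiableAt ℝ (fun s => η t s u) x := fun t u x =>
    ((hη.comp (contDiff_const.prodMk (contDiff_id.prodMk contDiff_const))).differentiable (by simp)).differentiableAt
  have hηu : ∀ t x u : ℝ, DifferentiableAt ℝ (fun s => η t x s) u := fun t x u =>
    ((hη.comp (contDiff_const.prodMk (contDiff_const.prodMk contDiff_id))).differentiable (by simp)).differentiableAt
  have hlam' : ∀ u : ℝ, DifferentiableAt ℝ lam u := fun u =>
    (hlam.differentiable (by simp)).differentiableAt
  intro t x u p
  simp only [pt, px, pu, fT, fX, fU, fP]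
  rw [deriv_const_mul _ (hτt x t), deriv_const_mul _ (hτx t x),
      deriv_const_mul _ (hξt x t), deriv_const_mul _ (hξx t x),
      deriv_const_mul _ (hηt x u t), deriv_const_mul _ (hηx t u x),
      deriv_mul_const (hlam' u), deriv_mul_const (hlam' u),
      deriv_fun_mul (hlam' u) (hηu t x u),
      deriv_const]
  have hαt : DifferentiableAt ℝ (fun s => α s u) t :=
    ((hα.comp (contDiff_id.prodMk contDiff_const)).differentiable (by simp)).differentiableAt
  have hαu : DifferentiableAt ℝ (fun s => α t s) u :=
    ((hα.comp (contDiff_const.prodMk contDiff_id)).differentiable (by simp)).differentiableAt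
  have hfT : deriv (fun s => α s u * p) t = deriv (fun s => α s u) t * p :=
    deriv_mul_const hαt p
  have hfU : deriv (fun s => α t s * p) u = deriv (fun s => α t s) u * p :=
    deriv_mul_const hαu p
  rw [hfT, hfU]
  have hp : deriv (fun s => α t u * s) p = α t u := by
    rw [deriv_const_mul _ differentiableAt_fun_id]
    simp
  rw [hp]
  have e1 := h1 t x u
  have e2 := h2 t x u
  simp only [pt, px] at e1
  linear_combination lam u * e1 + lam u * p * e2
end
end

section
/- Let α : ℝ² → ℝ be a smooth function of (t,u), let τ, ξ : ℝ² → ℝ be smooth functions of (t,x) and η : ℝ³ → ℝ a smooth function of (t,x,u) satisfying for all (t,x,u): η_t + α(t,u)·η_x = 0 and −ξ_t + α·τ_t + α_t·τ + α_u·η − α·ξ_x + α²·τ_x = 0, let λ : ℝ → ℝ be smooth, and let u : ℝ² → ℝ be a smooth solution of u_t + α(t,u)·u_x = 0. Then the vector field with components C⁰ = λ(u)·[η + (τ·α − ξ)·u_x]·u and C¹ = λ(u)·[η·α − (τ·α − ξ)·u_t]·u, where α is evaluated at (t,u(t,x)) and τ, ξ, η at (t,x) resp. (t,x,u(t,x)),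 is conserved: ∂_t C⁰ + ∂_x C¹ = 0 at every (t,x). -/
noncomputable section

private lemma lin2 (L : ℝ × ℝ →L[ℝ] ℝ) (a b : ℝ) :
    L (a, b) = a * L (1, 0) + b * L (0, 1) := by
  have h : (a, b) = a • ((1:ℝ), (0:ℝ)) + b • ((0:ℝ), (1:ℝ)) := by
    simp [Prod.ext_iff]
  rw [h, map_add, map_smul, map_smul, smul_eq_mul, smul_eq_mul]

private lemma lin3 (L : ℝ × ℝ × ℝ →L[ℝ] ℝ) (a b c : ℝ) :
    L (a, b, c) = a * L (1,0,0) + b * L (0,1,0) + c * L (0,0,1) := by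
  have h : (a,b,c) = a • ((1:ℝ),(0:ℝ),(0:ℝ)) + b • ((0:ℝ),(1:ℝ),(0:ℝ))
      + c • ((0:ℝ),(0:ℝ),(1:ℝ)) := by
    simp [Prod.ext_iff]
  rw [h, map_add, map_add, map_smul, map_smul, map_smul]
  simp [smul_eq_mul]

private lemma hasDerivAt_comp2 (g : ℝ → ℝ → ℝ) (hg : Smooth2 g)
    {c₁ c₂ : ℝ → ℝ} {c₁' c₂' s : ℝ}
    (h₁ : HasDerivAt c₁ c₁' s) (h₂ : HasDerivAt c₂ c₂' s) :
    HasDerivAt (fun r => g (c₁ r) (c₂ r))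
      (c₁' * fderiv ℝ (fun p : ℝ × ℝ => g p.1 p.2) (c₁ s, c₂ s) (1, 0)
        + c₂' * fderiv ℝ (fun p : ℝ × ℝ => g p.1 p.2) (c₁ s, c₂ s) (0, 1)) s := by
  have hF := ((hg.differentiable (by simp)) (c₁ s, c₂ s)).hasFDerivAt
  have h := hF.comp_hasDerivAt s (h₁.prodMk h₂)
  rw [← lin2]
  exact h

private lemma hasDerivAt_comp3 (g : ℝ → ℝ → ℝ → ℝ) (hg : Smooth3 g)
    {c₁ c₂ c₃ : ℝ → ℝ} {c₁' c₂' c₃' s : ℝ}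
    (h₁ : HasDerivAt c₁ c₁' s) (h₂ : HasDerivAt c₂ c₂' s) (h₃ : HasDerivAt c₃ c₃' s) :
    HasDerivAt (fun r => g (c₁ r) (c₂ r) (c₃ r))
      (c₁' * fderiv ℝ (fun p : ℝ × ℝ × ℝ => g p.1 p.2.1 p.2.2) (c₁ s, c₂ s, c₃ s) (1,0,0)
        + c₂' * fderiv ℝ (fun p : ℝ × ℝ × ℝ => g p.1 p.2.1 p.2.2) (c₁ s, c₂ s, c₃ s) (0,1,0)
        + c₃' * fderiv ℝ (fun p : ℝ × ℝ × ℝ => g p.1 p.2.1 p.2.2) (c₁ s, c₂ s, c₃ s) (0,0,1)) s := by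
  have hF := ((hg.differentiable (by simp)) (c₁ s, c₂ s, c₃ s)).hasFDerivAt
  have h := hF.comp_hasDerivAt s (h₁.prodMk (h₂.prodMk h₃))
  rw [← lin3]
  exact h

theorem conservation_laws_from_projectable_symmetries
    (α : ℝ → ℝ → ℝ) (hα : Smooth2 α)
    (τ ξ : ℝ → ℝ → ℝ) (hτ : Smooth2 τ) (hξ : Smooth2 ξ)
    (η : ℝ → ℝ → ℝ → ℝ) (hη : Smooth3 η)
    (h1 : ∀ t x u : ℝ, pt3 η t x u + α t u * px3 η t x u = 0)
    (h2 : ∀ t x u : ℝ,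
      -(deriv (fun s => ξ s x) t) + α t u * deriv (fun s => τ s x) t
        + deriv (fun s => α s u) t * τ t x + deriv (fun s => α t s) u * η t x u
        - α t u * deriv (fun s => ξ t s) x + (α t u) ^ 2 * deriv (fun s => τ t s) x = 0)
    (lam : ℝ → ℝ) (hlam : ContDiff ℝ (⊤ : ℕ∞) lam)
    (u : ℝ → ℝ → ℝ) (hu : Smooth2 u)
    (hueq : ∀ t x : ℝ,
      deriv (fun s => u s x) t + α t (u t x) * deriv (fun s => u t s) x = 0) :
    ∀ t x : ℝ,
      deriv (fun s =>
        lam (u s x) * (η s x (u s x)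
          + (τ s x * α s (u s x) - ξ s x) * deriv (fun r => u s r) x) * u s x) t
      + deriv (fun s =>
        lam (u t s) * (η t s (u t s) * α t (u t s)
          - (τ t s * α t (u t s) - ξ t s) * deriv (fun r => u r s) t) * u t s) x = 0 := by
  intro t x
  have hu' : ContDiff ℝ (⊤ : ℕ∞) (fun q : ℝ × ℝ => u q.1 q.2) := hu
  -- pointwise partial-derivative conversions
  have keyt : ∀ a b : ℝ, deriv (fun s => u s b) a
      = fderiv ℝ (fun q : ℝ × ℝ => u q.1 q.2) (a, b) (1, 0) := by
    intro a b
    simpa using (hasDerivAt_comp2 u hu (hasDerivAt_id a) (hasDerivAt_const a b)).deriv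
  have keyx : ∀ a b : ℝ, deriv (fun r => u a r) b
      = fderiv ℝ (fun q : ℝ × ℝ => u q.1 q.2) (a, b) (0, 1) := by
    intro a b
    simpa using (hasDerivAt_comp2 u hu (hasDerivAt_const b a) (hasDerivAt_id b)).deriv
  -- second derivative functions
  have hG2 : Smooth2 (fun a b : ℝ => fderiv ℝ (fun q : ℝ × ℝ => u q.1 q.2) (a, b) (0, 1)) :=
    (ContinuousLinearMap.apply ℝ ℝ ((0:ℝ),(1:ℝ))).contDiff.comp (hu'.fderiv_right (by simp))
  have hH2 : Smooth2 (fun a b : ℝ => fderiv ℝ (fun q : ℝ × ℝ => u q.1 q.2) (a, b) (1, 0)) :=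
    (ContinuousLinearMap.apply ℝ ℝ ((1:ℝ),(0:ℝ))).contDiff.comp (hu'.fderiv_right (by simp))
  -- Clairaut
  have hsecond : fderiv ℝ (fun p : ℝ × ℝ => fderiv ℝ (fun q : ℝ × ℝ => u q.1 q.2) p (1,0)) (t,x) (0,1)
      = fderiv ℝ (fun p : ℝ × ℝ => fderiv ℝ (fun q : ℝ × ℝ => u q.1 q.2) p (0,1)) (t,x) (1,0) := by
    have hd2 : HasFDerivAt (fderiv ℝ (fun q : ℝ × ℝ => u q.1 q.2))
        (fderiv ℝ (fderiv ℝ (fun q : ℝ × ℝ => u q.1 q.2)) (t,x)) (t,x) :=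
      (((hu'.fderiv_right (m := 1) (WithTop.coe_le_coe.mpr le_top)).differentiable one_ne_zero) (t,x)).hasFDerivAt
    have hev : ∀ v w : ℝ × ℝ,
        fderiv ℝ (fun p : ℝ × ℝ => fderiv ℝ (fun q : ℝ × ℝ => u q.1 q.2) p v) (t,x) w
          = fderiv ℝ (fderiv ℝ (fun q : ℝ × ℝ => u q.1 q.2)) (t,x) w v := by
      intro v w
      have h := ((ContinuousLinearMap.apply ℝ ℝ v).hasFDerivAt).comp (t,x) hd2
      have h2 : fderiv ℝ (fun p : ℝ × ℝ => fderiv ℝ (fun q : ℝ × ℝ => u q.1 q.2) p v) (t,x)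
          = (ContinuousLinearMap.apply ℝ ℝ v).comp
              (fderiv ℝ (fderiv ℝ (fun q : ℝ × ℝ => u q.1 q.2)) (t,x)) := h.fderiv
      rw [h2]
      simp
    rw [hev, hev]
    exact second_derivative_symmetric
      (fun y => ((hu'.differentiable (by simp)) y).hasFDerivAt) hd2 (0,1) (1,0)
  -- conversions for α, τ, ξ, η partials
  have kat : ∀ a b : ℝ, deriv (fun s => α s b) a
      = fderiv ℝ (fun p : ℝ × ℝ => α p.1 p.2) (a, b) (1, 0) := by
    intro a b
    simpa using (hasDerivAt_comp2 α hα (hasDerivAt_id a) (hasDerivAt_const a b)).deriv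
  have kau : ∀ a b : ℝ, deriv (fun s => α a s) b
      = fderiv ℝ (fun p : ℝ × ℝ => α p.1 p.2) (a, b) (0, 1) := by
    intro a b
    simpa using (hasDerivAt_comp2 α hα (hasDerivAt_const b a) (hasDerivAt_id b)).deriv
  have ktt : ∀ a b : ℝ, deriv (fun s => τ s b) a
      = fderiv ℝ (fun p : ℝ × ℝ => τ p.1 p.2) (a, b) (1, 0) := by
    intro a b
    simpa using (hasDerivAt_comp2 τ hτ (hasDerivAt_id a) (hasDerivAt_const a b)).deriv
  have ktx : ∀ a b : ℝ, deriv (fun s => τ a s) b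
      = fderiv ℝ (fun p : ℝ × ℝ => τ p.1 p.2) (a, b) (0, 1) := by
    intro a b
    simpa using (hasDerivAt_comp2 τ hτ (hasDerivAt_const b a) (hasDerivAt_id b)).deriv
  have kxt : ∀ a b : ℝ, deriv (fun s => ξ s b) a
      = fderiv ℝ (fun p : ℝ × ℝ => ξ p.1 p.2) (a, b) (1, 0) := by
    intro a b
    simpa using (hasDerivAt_comp2 ξ hξ (hasDerivAt_id a) (hasDerivAt_const a b)).deriv
  have kxx : ∀ a b : ℝ, deriv (fun s => ξ a s) b
      = fderiv ℝ (fun p : ℝ × ℝ => ξ p.1 p.2) (a, b) (0, 1) := by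
    intro a b
    simpa using (hasDerivAt_comp2 ξ hξ (hasDerivAt_const b a) (hasDerivAt_id b)).deriv
  -- symmetry equations in fderiv language
  have e1 : fderiv ℝ (fun p : ℝ × ℝ × ℝ => η p.1 p.2.1 p.2.2) (t, x, u t x) (1,0,0)
      + α t (u t x) * fderiv ℝ (fun p : ℝ × ℝ × ℝ => η p.1 p.2.1 p.2.2) (t, x, u t x) (0,1,0)
      = 0 := by
    have h := h1 t x (u t x)
    unfold pt3 px3 at h
    have k1 : deriv (fun s => η s x (u t x)) t
        = fderiv ℝ (fun p : ℝ × ℝ × ℝ => η p.1 p.2.1 p.2.2) (t, x, u t x) (1,0,0) := by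
      simpa using (hasDerivAt_comp3 η hη (hasDerivAt_id t) (hasDerivAt_const t x)
        (hasDerivAt_const t (u t x))).deriv
    have k2 : deriv (fun s => η t s (u t x)) x
        = fderiv ℝ (fun p : ℝ × ℝ × ℝ => η p.1 p.2.1 p.2.2) (t, x, u t x) (0,1,0) := by
      simpa using (hasDerivAt_comp3 η hη (hasDerivAt_const x t) (hasDerivAt_id x)
        (hasDerivAt_const x (u t x))).deriv
    rw [k1, k2] at h
    exact h
  have e2 : -(fderiv ℝ (fun p : ℝ × ℝ => ξ p.1 p.2) (t, x) (1, 0))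
      + α t (u t x) * fderiv ℝ (fun p : ℝ × ℝ => τ p.1 p.2) (t, x) (1, 0)
      + fderiv ℝ (fun p : ℝ × ℝ => α p.1 p.2) (t, u t x) (1, 0) * τ t x
      + fderiv ℝ (fun p : ℝ × ℝ => α p.1 p.2) (t, u t x) (0, 1) * η t x (u t x)
      - α t (u t x) * fderiv ℝ (fun p : ℝ × ℝ => ξ p.1 p.2) (t, x) (0, 1)
      + (α t (u t x)) ^ 2 * fderiv ℝ (fun p : ℝ × ℝ => τ p.1 p.2) (t, x) (0, 1) = 0 := by
    have h := h2 t x (u t x)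
    rw [kxt, ktt, kat, kau, kxx, ktx] at h
    exact h
  have e3 : fderiv ℝ (fun q : ℝ × ℝ => u q.1 q.2) (t, x) (1, 0)
      + α t (u t x) * fderiv ℝ (fun q : ℝ × ℝ => u q.1 q.2) (t, x) (0, 1) = 0 := by
    have h := hueq t x
    rw [keyt, keyx] at h
    exact h
  -- x-direction elementary derivatives at (t,x)
  have hUx : HasDerivAt (fun r => u t r)
      (fderiv ℝ (fun q : ℝ × ℝ => u q.1 q.2) (t, x) (0, 1)) x := by
    simpa using hasDerivAt_comp2 u hu (hasDerivAt_const x t) (hasDerivAt_id x)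
  have hAx : HasDerivAt (fun r => α t (u t r))
      (fderiv ℝ (fun q : ℝ × ℝ => u q.1 q.2) (t, x) (0, 1)
        * fderiv ℝ (fun p : ℝ × ℝ => α p.1 p.2) (t, u t x) (0, 1)) x := by
    simpa using hasDerivAt_comp2 α hα (hasDerivAt_const x t) hUx
  have hGx : HasDerivAt (fun r => fderiv ℝ (fun q : ℝ × ℝ => u q.1 q.2) (t, r) (0, 1))
      (fderiv ℝ (fun p : ℝ × ℝ => fderiv ℝ (fun q : ℝ × ℝ => u q.1 q.2) p (0,1)) (t,x) (0,1)) x := by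
    simpa using hasDerivAt_comp2 _ hG2 (hasDerivAt_const x t) (hasDerivAt_id x)
  have hHx : HasDerivAt (fun r => fderiv ℝ (fun q : ℝ × ℝ => u q.1 q.2) (t, r) (1, 0))
      (fderiv ℝ (fun p : ℝ × ℝ => fderiv ℝ (fun q : ℝ × ℝ => u q.1 q.2) p (1,0)) (t,x) (0,1)) x := by
    simpa using hasDerivAt_comp2 _ hH2 (hasDerivAt_const x t) (hasDerivAt_id x)
  -- differentiated PDE in x, then Clairaut
  have e4 : fderiv ℝ (fun p : ℝ × ℝ => fderiv ℝ (fun q : ℝ × ℝ => u q.1 q.2) p (0,1)) (t,x) (1,0)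
      + (fderiv ℝ (fun p : ℝ × ℝ => α p.1 p.2) (t, u t x) (0, 1)
          * fderiv ℝ (fun q : ℝ × ℝ => u q.1 q.2) (t, x) (0, 1))
        * fderiv ℝ (fun q : ℝ × ℝ => u q.1 q.2) (t, x) (0, 1)
      + α t (u t x)
        * fderiv ℝ (fun p : ℝ × ℝ => fderiv ℝ (fun q : ℝ × ℝ => u q.1 q.2) p (0,1)) (t,x) (0,1)
      = 0 := by
    have hz : HasDerivAt (fun r => fderiv ℝ (fun q : ℝ × ℝ => u q.1 q.2) (t, r) (1, 0)
        + α t (u t r) * fderiv ℝ (fun q : ℝ × ℝ => u q.1 q.2) (t, r) (0, 1))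
        (fderiv ℝ (fun p : ℝ × ℝ => fderiv ℝ (fun q : ℝ × ℝ => u q.1 q.2) p (1,0)) (t,x) (0,1)
          + ((fderiv ℝ (fun q : ℝ × ℝ => u q.1 q.2) (t, x) (0, 1)
              * fderiv ℝ (fun p : ℝ × ℝ => α p.1 p.2) (t, u t x) (0, 1))
            * fderiv ℝ (fun q : ℝ × ℝ => u q.1 q.2) (t, x) (0, 1)
            + α t (u t x)
              * fderiv ℝ (fun p : ℝ × ℝ => fderiv ℝ (fun q : ℝ × ℝ => u q.1 q.2) p (0,1)) (t,x) (0,1))) x :=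
      hHx.add (hAx.mul hGx)
    have hzero : (fun r => fderiv ℝ (fun q : ℝ × ℝ => u q.1 q.2) (t, r) (1, 0)
        + α t (u t r) * fderiv ℝ (fun q : ℝ × ℝ => u q.1 q.2) (t, r) (0, 1)) = fun _ : ℝ => (0:ℝ) := by
      funext r
      rw [← keyt t r, ← keyx t r]
      exact hueq t r
    rw [hzero] at hz
    have h0 := hz.unique (hasDerivAt_const x 0)
    rw [← hsecond]
    linarith [h0]
  -- t-direction elementary derivatives at (t,x)
  have hUt : HasDerivAt (fun s => u s x)
      (fderiv ℝ (fun q : ℝ × ℝ => u q.1 q.2) (t, x) (1, 0)) t := by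
    simpa using hasDerivAt_comp2 u hu (hasDerivAt_id t) (hasDerivAt_const t x)
  have hld : HasDerivAt lam (deriv lam (u t x)) (u t x) :=
    ((hlam.differentiable (by simp)) (u t x)).hasDerivAt
  have hlamt : HasDerivAt (fun s => lam (u s x))
      (deriv lam (u t x) * fderiv ℝ (fun q : ℝ × ℝ => u q.1 q.2) (t, x) (1, 0)) t :=
    hld.comp t hUt
  have hlamx : HasDerivAt (fun s => lam (u t s))
      (deriv lam (u t x) * fderiv ℝ (fun q : ℝ × ℝ => u q.1 q.2) (t, x) (0, 1)) x :=
    hld.comp x hUx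
  have hetat : HasDerivAt (fun s => η s x (u s x))
      (fderiv ℝ (fun p : ℝ × ℝ × ℝ => η p.1 p.2.1 p.2.2) (t, x, u t x) (1,0,0)
        + fderiv ℝ (fun q : ℝ × ℝ => u q.1 q.2) (t, x) (1, 0)
          * fderiv ℝ (fun p : ℝ × ℝ × ℝ => η p.1 p.2.1 p.2.2) (t, x, u t x) (0,0,1)) t := by
    simpa using hasDerivAt_comp3 η hη (hasDerivAt_id t) (hasDerivAt_const t x) hUt
  have hetax : HasDerivAt (fun s => η t s (u t s))
      (fderiv ℝ (fun p : ℝ × ℝ × ℝ => η p.1 p.2.1 p.2.2) (t, x, u t x) (0,1,0)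
        + fderiv ℝ (fun q : ℝ × ℝ => u q.1 q.2) (t, x) (0, 1)
          * fderiv ℝ (fun p : ℝ × ℝ × ℝ => η p.1 p.2.1 p.2.2) (t, x, u t x) (0,0,1)) x := by
    simpa using hasDerivAt_comp3 η hη (hasDerivAt_const x t) (hasDerivAt_id x) hUx
  have halt : HasDerivAt (fun s => α s (u s x))
      (fderiv ℝ (fun p : ℝ × ℝ => α p.1 p.2) (t, u t x) (1, 0)
        + fderiv ℝ (fun q : ℝ × ℝ => u q.1 q.2) (t, x) (1, 0)
          * fderiv ℝ (fun p : ℝ × ℝ => α p.1 p.2) (t, u t x) (0, 1)) t := by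
    simpa using hasDerivAt_comp2 α hα (hasDerivAt_id t) hUt
  have htaut : HasDerivAt (fun s => τ s x)
      (fderiv ℝ (fun p : ℝ × ℝ => τ p.1 p.2) (t, x) (1, 0)) t := by
    simpa using hasDerivAt_comp2 τ hτ (hasDerivAt_id t) (hasDerivAt_const t x)
  have htaux : HasDerivAt (fun s => τ t s)
      (fderiv ℝ (fun p : ℝ × ℝ => τ p.1 p.2) (t, x) (0, 1)) x := by
    simpa using hasDerivAt_comp2 τ hτ (hasDerivAt_const x t) (hasDerivAt_id x)
  have hxit : HasDerivAt (fun s => ξ s x)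
      (fderiv ℝ (fun p : ℝ × ℝ => ξ p.1 p.2) (t, x) (1, 0)) t := by
    simpa using hasDerivAt_comp2 ξ hξ (hasDerivAt_id t) (hasDerivAt_const t x)
  have hxix : HasDerivAt (fun s => ξ t s)
      (fderiv ℝ (fun p : ℝ × ℝ => ξ p.1 p.2) (t, x) (0, 1)) x := by
    simpa using hasDerivAt_comp2 ξ hξ (hasDerivAt_const x t) (hasDerivAt_id x)
  have hGt : HasDerivAt (fun s => fderiv ℝ (fun q : ℝ × ℝ => u q.1 q.2) (s, x) (0, 1))
      (fderiv ℝ (fun p : ℝ × ℝ => fderiv ℝ (fun q : ℝ × ℝ => u q.1 q.2) p (0,1)) (t,x) (1,0)) t := by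
    simpa using hasDerivAt_comp2 _ hG2 (hasDerivAt_id t) (hasDerivAt_const t x)
  -- rewrite the two functions in the goal
  have hfun1 : (fun s =>
        lam (u s x) * (η s x (u s x)
          + (τ s x * α s (u s x) - ξ s x) * deriv (fun r => u s r) x) * u s x)
      = (fun s =>
        lam (u s x) * (η s x (u s x)
          + (τ s x * α s (u s x) - ξ s x)
            * fderiv ℝ (fun q : ℝ × ℝ => u q.1 q.2) (s, x) (0, 1)) * u s x) := by
    funext s
    rw [keyx s x]
  have hfun2 : (fun s =>
        lam (u t s) * (η t s (u t s) * α t (u t s)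
          - (τ t s * α t (u t s) - ξ t s) * deriv (fun r => u r s) t) * u t s)
      = (fun s =>
        lam (u t s) * (η t s (u t s) * α t (u t s)
          - (τ t s * α t (u t s) - ξ t s)
            * (-(α t (u t s) * fderiv ℝ (fun q : ℝ × ℝ => u q.1 q.2) (t, s) (0, 1)))) * u t s) := by
    funext s
    have h5 := hueq t s
    rw [keyt t s, keyx t s] at h5
    have h6 : deriv (fun r => u r s) t
        = -(α t (u t s) * fderiv ℝ (fun q : ℝ × ℝ => u q.1 q.2) (t, s) (0, 1)) := by
      rw [keyt t s]; linarith
    rw [h6]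
  have hC0 := (hlamt.fun_mul (hetat.fun_add (((htaut.fun_mul halt).fun_sub hxit).fun_mul hGt))).fun_mul hUt
  have hC1 := (hlamx.fun_mul ((hetax.fun_mul hAx).fun_sub
      (((htaux.fun_mul hAx).fun_sub hxix).fun_mul ((hAx.fun_mul hGx).fun_neg)))).fun_mul hUx
  rw [hfun1, hfun2, hC0.deriv, hC1.deriv]
  linear_combination
    (lam (u t x) * u t x) * e1
    + (lam (u t x) * u t x * fderiv ℝ (fun q : ℝ × ℝ => u q.1 q.2) (t, x) (0, 1)) * e2
    + (lam (u t x) * u t x * (τ t x * α t (u t x) - ξ t x)) * e4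
    + (deriv lam (u t x)
        * (η t x (u t x) + (τ t x * α t (u t x) - ξ t x)
            * fderiv ℝ (fun q : ℝ × ℝ => u q.1 q.2) (t, x) (0, 1)) * u t x
      + lam (u t x) * fderiv ℝ (fun p : ℝ × ℝ × ℝ => η p.1 p.2.1 p.2.2) (t, x, u t x) (0,0,1) * u t x
      + lam (u t x) * τ t x * fderiv ℝ (fun p : ℝ × ℝ => α p.1 p.2) (t, u t x) (0, 1)
          * fderiv ℝ (fun q : ℝ × ℝ => u q.1 q.2) (t, x) (0, 1) * u t x
      + lam (u t x) * (η t x (u t x) + (τ t x * α t (u t x) - ξ t x)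
            * fderiv ℝ (fun q : ℝ × ℝ => u q.1 q.2) (t, x) (0, 1))) * e3
end
end

section
/- Let a : ℝ → ℝ be smooth and let u : ℝ² → ℝ be a smooth function satisfying the inviscid Burgers equation ∂_t u + a(u)·∂_x u = 0 at every (t,x). Then the vector field with components C⁰(t,x) = (t·a(u) − x)·u·∂_x u and C¹(t,x) = (x − t·a(u))·u·∂_t u (with u and its derivatives evaluated at (t,x)) is conserved: ∂_t C⁰ + ∂_x C¹ = 0 at every (t,x). -/
noncomputable section

/-- u is a (smooth) solution of the inviscid Burgers equation u_t + a(u)·u_x = 0. -/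
def BurgersSol (a : ℝ → ℝ) (u : ℝ → ℝ → ℝ) : Prop :=
  ∀ t x : ℝ, deriv (fun s => u s x) t + a (u t x) * deriv (fun s => u t s) x = 0

namespace BurgersAux

lemma key1 (G : ℝ × ℝ → ℝ) (hG : ContDiff ℝ 1 G) (t x : ℝ) :
    HasDerivAt (fun s => G (s, x)) (fderiv ℝ G (t, x) ((1:ℝ), (0:ℝ))) t := by
  have h1 : HasFDerivAt G (fderiv ℝ G (t, x)) (t, x) :=
    (hG.differentiable one_ne_zero (t, x)).hasFDerivAt
  have h2 : HasDerivAt (fun s : ℝ => (s, x)) ((1:ℝ), (0:ℝ)) t :=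
    HasDerivAt.prodMk (hasDerivAt_id t) (hasDerivAt_const t x)
  exact h1.comp_hasDerivAt t h2

lemma key2 (G : ℝ × ℝ → ℝ) (hG : ContDiff ℝ 1 G) (t x : ℝ) :
    HasDerivAt (fun s => G (t, s)) (fderiv ℝ G (t, x) ((0:ℝ), (1:ℝ))) x := by
  have h1 : HasFDerivAt G (fderiv ℝ G (t, x)) (t, x) :=
    (hG.differentiable one_ne_zero (t, x)).hasFDerivAt
  have h2 : HasDerivAt (fun s : ℝ => (t, s)) ((0:ℝ), (1:ℝ)) x :=
    HasDerivAt.prodMk (hasDerivAt_const x t) (hasDerivAt_id x)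
  exact h1.comp_hasDerivAt x h2

variable (u : ℝ → ℝ → ℝ)

def U : ℝ × ℝ → ℝ := fun q => u q.1 q.2
def P1 : ℝ × ℝ → ℝ := fun q => fderiv ℝ (U u) q ((1:ℝ), (0:ℝ))
def P2 : ℝ × ℝ → ℝ := fun q => fderiv ℝ (U u) q ((0:ℝ), (1:ℝ))

variable (hu : Smooth2 u)
include hu

lemma hP1s : ContDiff ℝ 1 (P1 u) :=
  ((hu.of_le (WithTop.coe_le_coe.mpr le_top) : ContDiff ℝ 2 (U u)).fderiv_right (by norm_num)).clm_apply contDiff_const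

lemma hP2s : ContDiff ℝ 1 (P2 u) :=
  ((hu.of_le (WithTop.coe_le_coe.mpr le_top) : ContDiff ℝ 2 (U u)).fderiv_right (by norm_num)).clm_apply contDiff_const

lemma fderiv_apply_dir (v : ℝ × ℝ) (q : ℝ × ℝ) :
    fderiv ℝ (fun p => fderiv ℝ (U u) p v) q
      = (ContinuousLinearMap.apply ℝ ℝ v).comp (fderiv ℝ (fderiv ℝ (U u)) q) := by
  have hfd : DifferentiableAt ℝ (fderiv ℝ (U u)) q :=
    (((hu.of_le (WithTop.coe_le_coe.mpr le_top) : ContDiff ℝ 2 (U u)).fderiv_right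
      (m := 1) (by norm_num)).differentiable one_ne_zero) q
  exact ((ContinuousLinearMap.apply ℝ ℝ v).hasFDerivAt.comp q hfd.hasFDerivAt).fderiv

lemma clairaut (t x : ℝ) :
    fderiv ℝ (P2 u) (t, x) ((1:ℝ), (0:ℝ)) = fderiv ℝ (P1 u) (t, x) ((0:ℝ), (1:ℝ)) := by
  have hsymm : IsSymmSndFDerivAt ℝ (U u) (t, x) :=
    (hu.of_le (WithTop.coe_le_coe.mpr le_top) : ContDiff ℝ 2 (U u)).contDiffAt.isSymmSndFDerivAt (by simp)
  rw [show P2 u = fun p => fderiv ℝ (U u) p ((0:ℝ),(1:ℝ)) from rfl,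
      show P1 u = fun p => fderiv ℝ (U u) p ((1:ℝ),(0:ℝ)) from rfl,
      fderiv_apply_dir u hu, fderiv_apply_dir u hu]
  exact hsymm ((1:ℝ),(0:ℝ)) ((0:ℝ),(1:ℝ))

end BurgersAux

open BurgersAux in
theorem burgers_conservation_law_scaling_symmetry
    (a : ℝ → ℝ) (ha : ContDiff ℝ (⊤ : ℕ∞) a)
    (u : ℝ → ℝ → ℝ) (hu : Smooth2 u) (hueq : BurgersSol a u) :
    ∀ t x : ℝ,
      deriv (fun s => (s * a (u s x) - x) * u s x * deriv (fun r => u s r) x) t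
      + deriv (fun s => (s - t * a (u t s)) * u t s * deriv (fun r => u r s) t) x
        = 0 := by
  intro t x
  have hU1 : ContDiff ℝ 1 (U u) := hu.of_le (by simp)
  have hd1 : ∀ t0 x0 : ℝ, deriv (fun s => u s x0) t0 = P1 u (t0, x0) :=
    fun t0 x0 => (key1 (U u) hU1 t0 x0).deriv
  have hd2 : ∀ t0 x0 : ℝ, deriv (fun s => u t0 s) x0 = P2 u (t0, x0) :=
    fun t0 x0 => (key2 (U u) hU1 t0 x0).deriv
  have e1 : (fun s => (s * a (u s x) - x) * u s x * deriv (fun r => u s r) x)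
      = (fun s => (s * a (u s x) - x) * u s x * P2 u (s, x)) := by
    funext s; rw [hd2 s x]
  have e2 : (fun s => (s - t * a (u t s)) * u t s * deriv (fun r => u r s) t)
      = (fun s => (s - t * a (u t s)) * u t s * P1 u (t, s)) := by
    funext s; rw [hd1 t s]
  rw [e1, e2]
  have h_u1 : HasDerivAt (fun s => u s x) (P1 u (t, x)) t := key1 (U u) hU1 t x
  have h_u2 : HasDerivAt (fun s => u t s) (P2 u (t, x)) x := key2 (U u) hU1 t x
  have h_a : HasDerivAt a (deriv a (u t x)) (u t x) :=
    ((ha.differentiable (by simp)) (u t x)).hasDerivAt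
  have h_a1 : HasDerivAt (fun s => a (u s x)) (deriv a (u t x) * P1 u (t, x)) t :=
    h_a.comp t h_u1
  have h_a2 : HasDerivAt (fun s => a (u t s)) (deriv a (u t x) * P2 u (t, x)) x :=
    h_a.comp x h_u2
  have h_P2t : HasDerivAt (fun s => P2 u (s, x)) (fderiv ℝ (P2 u) (t, x) ((1:ℝ),(0:ℝ))) t :=
    key1 (P2 u) (hP2s u hu) t x
  have h_P1x : HasDerivAt (fun s => P1 u (t, s)) (fderiv ℝ (P1 u) (t, x) ((0:ℝ),(1:ℝ))) x :=
    key2 (P1 u) (hP1s u hu) t x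
  have hF : HasDerivAt (fun s => (s * a (u s x) - x) * u s x * P2 u (s, x))
      (((1 * a (u t x) + t * (deriv a (u t x) * P1 u (t, x))) * u t x
          + (t * a (u t x) - x) * P1 u (t, x)) * P2 u (t, x)
        + (t * a (u t x) - x) * u t x * fderiv ℝ (P2 u) (t, x) ((1:ℝ),(0:ℝ))) t :=
    ((((hasDerivAt_id t).mul h_a1).sub_const x).mul h_u1).mul h_P2t
  have hG : HasDerivAt (fun s => (s - t * a (u t s)) * u t s * P1 u (t, s))
      (((1 - t * (deriv a (u t x) * P2 u (t, x))) * u t x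
          + (x - t * a (u t x)) * P2 u (t, x)) * P1 u (t, x)
        + (x - t * a (u t x)) * u t x * fderiv ℝ (P1 u) (t, x) ((0:ℝ),(1:ℝ))) x :=
    (((hasDerivAt_id x).sub (h_a2.const_mul t)).mul h_u2).mul h_P1x
  rw [hF.deriv, hG.deriv]
  have hb := hueq t x
  rw [hd1 t x, hd2 t x] at hb
  have hc := clairaut u hu t x
  linear_combination (u t x) * hb + ((t * a (u t x) - x) * u t x) * hc
end
end

section
/- Let a : ℝ → ℝ be smooth with a'(s) ≠ 0 for all s, let A : ℝ → ℝ be differentiable with A'(s) = s·a(s) for all s, and let u : ℝ² → ℝ be a smooth function satisfying the inviscid Burgers equation ∂_t u + a(u)·∂_x u = 0 at every (t,x). Then ∂_t[a(u)·u/a'(u)] + ∂_x[a(u)²·u/a'(u) − A(u)] = 0 at every (t,x). -/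
noncomputable section

theorem burgers_conservation_law_X4
    (a : ℝ → ℝ) (ha : ContDiff ℝ (⊤ : ℕ∞) a) (ha' : ∀ s : ℝ, deriv a s ≠ 0)
    (A : ℝ → ℝ) (hA : ∀ s : ℝ, HasDerivAt A (s * a s) s)
    (u : ℝ → ℝ → ℝ) (hu : Smooth2 u) (hueq : BurgersSol a u) :
    ∀ t x : ℝ,
      deriv (fun s => a (u s x) * u s x / deriv a (u s x)) t
      + deriv (fun s => (a (u t s)) ^ 2 * u t s / deriv a (u t s) - A (u t s)) x
        = 0 := by
  intro t x
  set F : ℝ → ℝ := fun s => a s * s / deriv a s with hFdef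
  have hainf : ContDiff ℝ (⊤ : ℕ∞) a := ha.of_le (by simp)
  have hderivA : Differentiable ℝ (deriv a) :=
    ((contDiff_infty_iff_deriv.mp hainf).2).differentiable (by norm_num)
  have haD : Differentiable ℝ a := ha.differentiable (by norm_num)
  have hFhas : ∀ s : ℝ, HasDerivAt F (deriv F s) s := by
    intro s
    exact (((haD s).mul differentiableAt_id).div
      (hderivA s) (ha' s)).hasDerivAt
  have hGhas : ∀ s : ℝ, HasDerivAt (fun y => a y ^ 2 * y / deriv a y - A y)
      (a s * deriv F s) s := by
    intro s
    have h1 : (fun y => a y ^ 2 * y / deriv a y - A y) = fun y => a y * F y - A y := by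
      funext y; simp only [hFdef]; ring
    rw [h1]
    have h2 := (((haD s).hasDerivAt.mul (hFhas s)).sub (hA s))
    have h3 : deriv a s * F s + a s * deriv F s - s * a s = a s * deriv F s := by
      have hd := ha' s
      have : deriv a s * F s = a s * s := by
        simp only [hFdef]
        field_simp
      rw [this]; ring
    rwa [h3] at h2
  have huD : Differentiable ℝ (fun q : ℝ × ℝ => u q.1 q.2) := hu.differentiable (by norm_num)
  have hut : HasDerivAt (fun s => u s x) (deriv (fun s => u s x) t) t := by
    have : DifferentiableAt ℝ (fun s => u s x) t :=
      by have := (huD (t, x)).comp t ((differentiableAt_id : DifferentiableAt ℝ id t).prodMk (differentiableAt_const x)); exact this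
    exact this.hasDerivAt
  have hux : HasDerivAt (fun s => u t s) (deriv (fun s => u t s) x) x := by
    have : DifferentiableAt ℝ (fun s => u t s) x :=
      (huD (t, x)).comp x ((differentiableAt_const t).prodMk differentiableAt_id)
    exact this.hasDerivAt
  have h1 : deriv (fun s => a (u s x) * u s x / deriv a (u s x)) t
      = deriv F (u t x) * deriv (fun s => u s x) t :=
    by have := (HasDerivAt.comp t (hFhas (u t x)) hut).deriv; exact this
  have h2 : deriv (fun s => (a (u t s)) ^ 2 * u t s / deriv a (u t s) - A (u t s)) x
      = a (u t x) * deriv F (u t x) * deriv (fun s => u t s) x :=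
    (HasDerivAt.comp x (hGhas (u t x)) hux).deriv
  rw [h1, h2]
  have := hueq t x
  linear_combination deriv F (u t x) * this
end
end

section
/- Let a : ℝ → ℝ be smooth with a'(s) ≠ 0 for all s, let A : ℝ → ℝ be differentiable with A'(s) = s·a(s) for all s, and let u : ℝ² → ℝ be a smooth function satisfying the inviscid Burgers equation ∂_t u + a(u)·∂_x u = 0 at every (t,x). Then ∂_t[a(u)²·u/a'(u) + A(u)] + ∂_x[a(u)³·u/a'(u)] = 0 at every (t,x). -/
noncomputable section

theorem burgers_conservation_law_X6
    (a : ℝ → ℝ) (ha : ContDiff ℝ (⊤ : ℕ∞) a) (ha' : ∀ s : ℝ, deriv a s ≠ 0)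
    (A : ℝ → ℝ) (hA : ∀ s : ℝ, HasDerivAt A (s * a s) s)
    (u : ℝ → ℝ → ℝ) (hu : Smooth2 u) (hueq : BurgersSol a u) :
    ∀ t x : ℝ,
      deriv (fun s => (a (u s x)) ^ 2 * u s x / deriv a (u s x) + A (u s x)) t
      + deriv (fun s => (a (u t s)) ^ 3 * u t s / deriv a (u t s)) x = 0 := by
  intro t x
  have haI : ContDiff ℝ ((⊤ : ℕ∞) : WithTop ℕ∞) a := ha.of_le (by simp)
  have haD : Differentiable ℝ a := ha.differentiable (by simp)
  have hdD : Differentiable ℝ (deriv a) :=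
    ((contDiff_infty_iff_deriv.mp haI).2).differentiable (by simp)
  have huD : Differentiable ℝ (fun q : ℝ × ℝ => u q.1 q.2) := hu.differentiable (by simp)
  -- partial derivatives of u
  have h1 : DifferentiableAt ℝ (fun s => u s x) t :=
    by have := (huD (t, x)).comp t (differentiableAt_id.prodMk (differentiableAt_const x) :
      DifferentiableAt ℝ (fun s : ℝ => (s, x)) t); exact this
  have h2 : DifferentiableAt ℝ (fun s => u t s) x :=
    by have := (huD (t, x)).comp x ((differentiableAt_const t).prodMk differentiableAt_id :
      DifferentiableAt ℝ (fun s : ℝ => (t, s)) x); exact this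
  set ut := deriv (fun s => u s x) t with hut_def
  set ux := deriv (fun s => u t s) x with hux_def
  have hut : HasDerivAt (fun s => u s x) ut t := h1.hasDerivAt
  have hux : HasDerivAt (fun s => u t s) ux x := h2.hasDerivAt
  set c := u t x with hc
  -- derivative of the quotient h(y) = a y ^ 2 * y / deriv a y at c
  have hda : HasDerivAt a (deriv a c) c := (haD c).hasDerivAt
  have hnum : HasDerivAt (fun y => a y ^ 2 * y)
      ((2 : ℕ) * a c ^ 1 * deriv a c * c + a c ^ 2 * 1) c :=
    (hda.pow 2).mul (hasDerivAt_id c)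
  have hdd : HasDerivAt (deriv a) (deriv (deriv a) c) c := (hdD c).hasDerivAt
  have hq := hnum.div hdd (ha' c)
  set H := (((2 : ℕ) * a c ^ 1 * deriv a c * c + a c ^ 2 * 1) * deriv a c -
      a c ^ 2 * c * deriv (deriv a) c) / deriv a c ^ 2 with hH
  have hF : HasDerivAt (fun y => a y ^ 2 * y / deriv a y + A y) (H + c * a c) c :=
    hq.add (hA c)
  have hGfun : (fun y => a y ^ 3 * y / deriv a y) =
      (fun y => a y * (a y ^ 2 * y / deriv a y)) := by
    funext y; ring
  have hG : HasDerivAt (fun y => a y ^ 3 * y / deriv a y)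
      (deriv a c * (a c ^ 2 * c / deriv a c) + a c * H) c := by
    rw [hGfun]; exact hda.mul hq
  have hFt := (hF.comp t hut).deriv
  have hGx := (hG.comp x hux).deriv
  simp only [Function.comp_def] at hFt hGx
  rw [hFt, hGx]
  have heq := hueq t x
  rw [← hut_def, ← hux_def, ← hc] at heq
  have hne : deriv a c ≠ 0 := ha' c
  have hu_t : ut = -(a c * ux) := by linarith
  rw [hu_t]
  field_simp
  ring
end
end

section
/- Let a : ℝ → ℝ be smooth with a'(s) ≠ 0 for all s, let A : ℝ → ℝ be differentiable with A'(s) = s·a(s) for all s, and let u : ℝ² → ℝ be a smooth function satisfying the inviscid Burgers equation ∂_t u + a(u)·∂_x u = 0 at every (t,x). Then ∂_t[(x − t·a(u))·u/a'(u) + t·u²/2] + ∂_x[(x − t·a(u))·a(u)·u/a'(u) + 2t·A(u) − x·u²/2] = 0 at every (t,x). -/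
noncomputable section

theorem burgers_conservation_law_X7
    (a : ℝ → ℝ) (ha : ContDiff ℝ (⊤ : ℕ∞) a) (ha' : ∀ s : ℝ, deriv a s ≠ 0)
    (A : ℝ → ℝ) (hA : ∀ s : ℝ, HasDerivAt A (s * a s) s)
    (u : ℝ → ℝ → ℝ) (hu : Smooth2 u) (hueq : BurgersSol a u) :
    ∀ t x : ℝ,
      deriv (fun s =>
        (x - s * a (u s x)) * u s x / deriv a (u s x) + s * (u s x) ^ 2 / 2) t
      + deriv (fun s =>
        (s - t * a (u t s)) * a (u t s) * u t s / deriv a (u t s)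
          + 2 * t * A (u t s) - s * (u t s) ^ 2 / 2) x = 0 := by
  intro t x
  have hda : Differentiable ℝ a := ha.differentiable (by simp)
  have hda' : Differentiable ℝ (deriv a) := by
    have h1 : ContDiff ℝ (↑(⊤:ℕ∞)) a := ha.of_le (by simp)
    exact ((contDiff_infty_iff_deriv.mp h1).2).differentiable (by simp)
  -- partial derivative functions
  set p := deriv (fun s => u s x) t with hp
  set q := deriv (fun s => u t s) x with hq
  have hud : Differentiable ℝ (fun q : ℝ × ℝ => u q.1 q.2) := hu.differentiable (by simp)
  have hv : HasDerivAt (fun s => u s x) p t := by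
    have : DifferentiableAt ℝ (fun s => u s x) t :=
      (hud.comp (differentiable_id.prodMk (differentiable_const x))).differentiableAt
    exact this.hasDerivAt
  have hw : HasDerivAt (fun s => u t s) q x := by
    have : DifferentiableAt ℝ (fun s => u t s) x :=
      (hud.comp ((differentiable_const t).prodMk differentiable_id)).differentiableAt
    exact this.hasDerivAt
  -- abbreviations
  set U := u t x with hU
  set α := a U with hα
  set α' := deriv a U with hα'
  set α'' := deriv (deriv a) U with hα''
  have hα'ne : α' ≠ 0 := ha' U
  -- compositions along t-direction
  have hav : HasDerivAt (fun s => a (u s x)) (α' * p) t :=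
    ((hda U).hasDerivAt).comp t hv
  have hdav : HasDerivAt (fun s => deriv a (u s x)) (α'' * p) t :=
    by have h := (hda' U).hasDerivAt.comp t hv; exact h
  -- compositions along x-direction
  have haw : HasDerivAt (fun s => a (u t s)) (α' * q) x :=
    ((hda U).hasDerivAt).comp x hw
  have hdaw : HasDerivAt (fun s => deriv a (u t s)) (α'' * q) x :=
    by have h := (hda' U).hasDerivAt.comp x hw; exact h
  have hAw : HasDerivAt (fun s => A (u t s)) ((U * α) * q) x :=
    (hA U).comp x hw
  -- derivative of first flux
  have hF : HasDerivAt (fun s =>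
      (x - s * a (u s x)) * u s x / deriv a (u s x) + s * (u s x) ^ 2 / 2)
      ((((0 - (1 * α + t * (α' * p))) * U + (x - t * α) * p) * α' -
        ((x - t * α) * U) * (α'' * p)) / α' ^ 2 +
        (1 * U ^ 2 + t * ((2:ℕ) * U ^ (2-1) * p)) / 2) t := by
    exact ((((hasDerivAt_const t x).sub ((hasDerivAt_id t).mul hav)).mul hv).div hdav
      hα'ne).add (((hasDerivAt_id t).mul (hv.pow 2)).div_const 2)
  have hG : HasDerivAt (fun s =>
      (s - t * a (u t s)) * a (u t s) * u t s / deriv a (u t s)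
        + 2 * t * A (u t s) - s * (u t s) ^ 2 / 2)
      (((((1 - (0 * α + t * (α' * q))) * α + (x - t * α) * (α' * q)) * U
          + ((x - t * α) * α) * q) * α' - ((x - t * α) * α * U) * (α'' * q)) / α' ^ 2
        + (0 * A U + 2 * t * ((U * α) * q))
        - (1 * U ^ 2 + x * ((2:ℕ) * U ^ (2-1) * q)) / 2) x := by
    exact (((((((hasDerivAt_id x).sub ((hasDerivAt_const x t).mul haw)).mul haw).mul hw).div
      hdaw hα'ne).add ((hasDerivAt_const x (2*t)).mul hAw)).sub
      (((hasDerivAt_id x).mul (hw.pow 2)).div_const 2))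
  rw [hF.deriv, hG.deriv]
  have hb : p + α * q = 0 := hueq t x
  have hp2 : p = -(α * q) := by linarith
  rw [hp2]
  field_simp
  ring
end
end

section
/- Let a : ℝ → ℝ be smooth with a'(s) ≠ 0 for all s, let A : ℝ → ℝ be differentiable with A'(s) = s·a(s) for all s, and let u : ℝ² → ℝ be a smooth function satisfying the inviscid Burgers equation ∂_t u + a(u)·∂_x u = 0 at every (t,x). Then ∂_t[(x − t·a(u))·a(u)·u/a'(u) + x·u² − t·A(u)] + ∂_x[(x − t·a(u))·a(u)²·u/a'(u) + x·A(u)] = 0 at every (t,x). -/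
noncomputable section

theorem burgers_conservation_law_X8
    (a : ℝ → ℝ) (ha : ContDiff ℝ (⊤ : ℕ∞) a) (ha' : ∀ s : ℝ, deriv a s ≠ 0)
    (A : ℝ → ℝ) (hA : ∀ s : ℝ, HasDerivAt A (s * a s) s)
    (u : ℝ → ℝ → ℝ) (hu : Smooth2 u) (hueq : BurgersSol a u) :
    ∀ t x : ℝ,
      deriv (fun s =>
        (x - s * a (u s x)) * a (u s x) * u s x / deriv a (u s x)
          + x * (u s x) ^ 2 - s * A (u s x)) t
      + deriv (fun s =>
        (s - t * a (u t s)) * (a (u t s)) ^ 2 * u t s / deriv a (u t s)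
          + s * A (u t s)) x = 0 := by
  intro t x
  have h1c : ContDiff ℝ (⊤ : ℕ∞) (fun s : ℝ => u s x) :=
    (hu : ContDiff ℝ (⊤ : ℕ∞) (fun q : ℝ × ℝ => u q.1 q.2)).comp (contDiff_id.prodMk contDiff_const)
  have h2c : ContDiff ℝ (⊤ : ℕ∞) (fun s : ℝ => u t s) :=
    (hu : ContDiff ℝ (⊤ : ℕ∞) (fun q : ℝ × ℝ => u q.1 q.2)).comp (contDiff_const.prodMk contDiff_id)
  have hUt : HasDerivAt (fun s => u s x) (deriv (fun s => u s x) t) t :=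
    ((h1c.differentiable (by simp)) t).hasDerivAt
  have hUx : HasDerivAt (fun s => u t s) (deriv (fun s => u t s) x) x :=
    ((h2c.differentiable (by simp)) x).hasDerivAt
  have hav : HasDerivAt a (deriv a (u t x)) (u t x) :=
    ((ha.differentiable (by simp)) (u t x)).hasDerivAt
  have hav' : HasDerivAt (deriv a) (deriv (deriv a) (u t x)) (u t x) :=
    ((((contDiff_infty_iff_deriv.mp (ha.of_le (by simp))).2.differentiable (by simp))) (u t x)).hasDerivAt
  have hAv : HasDerivAt A (u t x * a (u t x)) (u t x) := hA (u t x)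
  -- compositions in the t-direction
  have hat : HasDerivAt (fun s => a (u s x)) (deriv a (u t x) * deriv (fun s => u s x) t) t :=
    hav.comp t hUt
  have hat' : HasDerivAt (fun s => deriv a (u s x))
      (deriv (deriv a) (u t x) * deriv (fun s => u s x) t) t := by have := hav'.comp t hUt; exact this
  have hAt : HasDerivAt (fun s => A (u s x))
      (u t x * a (u t x) * deriv (fun s => u s x) t) t := hAv.comp t hUt
  -- compositions in the x-direction
  have hax : HasDerivAt (fun s => a (u t s)) (deriv a (u t x) * deriv (fun s => u t s) x) x :=
    hav.comp x hUx
  have hax' : HasDerivAt (fun s => deriv a (u t s))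
      (deriv (deriv a) (u t x) * deriv (fun s => u t s) x) x := by have := hav'.comp x hUx; exact this
  have hAx : HasDerivAt (fun s => A (u t s))
      (u t x * a (u t x) * deriv (fun s => u t s) x) x := hAv.comp x hUx
  -- the first big derivative
  have hden1 : (fun s => deriv a (u s x)) t ≠ 0 := ha' (u t x)
  have hden2 : (fun s => deriv a (u t s)) x ≠ 0 := ha' (u t x)
  have hE1 : HasDerivAt (fun s =>
        (x - s * a (u s x)) * a (u s x) * u s x / deriv a (u s x)
          + x * (u s x) ^ 2 - s * A (u s x)) _ t :=
    (((((((hasDerivAt_id t).mul hat).const_sub x).mul hat).mul hUt).div hat' hden1).add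
      ((hUt.pow 2).const_mul x)).sub ((hasDerivAt_id t).mul hAt)
  have hE2 : HasDerivAt (fun s =>
        (s - t * a (u t s)) * (a (u t s)) ^ 2 * u t s / deriv a (u t s)
          + s * A (u t s)) _ x :=
    (((((hasDerivAt_id x).sub (hax.const_mul t)).mul (hax.pow 2)).mul hUx).div hax' hden2).add
      ((hasDerivAt_id x).mul hAx)
  rw [hE1.deriv, hE2.deriv]
  have hb : deriv (fun s => u s x) t = -(a (u t x) * deriv (fun s => u t s) x) := by
    have := hueq t x; linarith
  simp only [id_eq, pow_one, Pi.mul_apply, Pi.sub_apply, Pi.pow_apply, Nat.cast_ofNat]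
  rw [hb]
  field_simp
  ring
end
end

section
/- Let a : ℝ → ℝ be smooth and let u : ℝ² → ℝ be a smooth function satisfying the inviscid Burgers equation ∂_t u + a(u)·∂_x u = 0 at every (t,x). Then the conserved vector with components C⁰ = (t·a(u) − x)·u·∂_x u and C¹ = (x − t·a(u))·u·∂_t u differs from the zero-order conserved vector (u²/2, A(u)) by a total divergence: at every (t,x), ∂_t C⁰ + ∂_x C¹ = ∂_t(u²/2) + ∂_x(A(u)), where A : ℝ → ℝ is differentiable with A'(s) = s·a(s) for all s. -/
noncomputable section

theorem burgers_first_order_vector_reduces_to_zero_order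
    (a : ℝ → ℝ) (ha : ContDiff ℝ (⊤ : ℕ∞) a)
    (A : ℝ → ℝ) (hA : ∀ s : ℝ, HasDerivAt A (s * a s) s)
    (u : ℝ → ℝ → ℝ) (hu : Smooth2 u) (hueq : BurgersSol a u) :
    ∀ t x : ℝ,
      deriv (fun s => (s * a (u s x) - x) * u s x * deriv (fun r => u s r) x) t
      + deriv (fun s => (s - t * a (u t s)) * u t s * deriv (fun r => u r s) t) x
      = deriv (fun s => (u s x) ^ 2 / 2) t + deriv (fun s => A (u t s)) x := by
  intro t x
  have hf : ContDiff ℝ (⊤ : ℕ∞) (fun q : ℝ × ℝ => u q.1 q.2) := hu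
  set f : ℝ × ℝ → ℝ := fun q : ℝ × ℝ => u q.1 q.2 with hfdef
  have hfd : Differentiable ℝ f := hf.differentiable (by simp)
  have hf' : ContDiff ℝ (⊤ : ℕ∞) (fderiv ℝ f) := hf.fderiv_right (by simp)
  -- partial derivatives
  have hx : ∀ c y : ℝ, HasDerivAt (fun r => u c r) (fderiv ℝ f (c, y) (0, 1)) y := by
    intro c y
    have h1 : HasDerivAt (fun r : ℝ => ((c, r) : ℝ × ℝ)) ((0 : ℝ), (1 : ℝ)) y :=
      HasDerivAt.prodMk (hasDerivAt_const y c) (hasDerivAt_id y)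
    exact (hfd (c, y)).hasFDerivAt.comp_hasDerivAt y h1
  have ht : ∀ c y : ℝ, HasDerivAt (fun r => u r y) (fderiv ℝ f (c, y) (1, 0)) c := by
    intro c y
    have h1 : HasDerivAt (fun r : ℝ => ((r, y) : ℝ × ℝ)) ((1 : ℝ), (0 : ℝ)) c :=
      HasDerivAt.prodMk (hasDerivAt_id c) (hasDerivAt_const c y)
    exact (hfd (c, y)).hasFDerivAt.comp_hasDerivAt c h1
  -- second derivative at (t, x)
  set B : (ℝ × ℝ) →L[ℝ] (ℝ × ℝ) →L[ℝ] ℝ := fderiv ℝ (fderiv ℝ f) (t, x) with hBdef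
  have hB : HasFDerivAt (fderiv ℝ f) B (t, x) :=
    (hf'.differentiable (by simp) (t, x)).hasFDerivAt
  have hBsymm : B (1, 0) (0, 1) = B (0, 1) (1, 0) :=
    second_derivative_symmetric (fun y => (hfd y).hasFDerivAt) hB (1, 0) (0, 1)
  -- derivative of s ↦ fderiv f (s, x) (0,1) at t
  have hQt : HasDerivAt (fun s : ℝ => fderiv ℝ f (s, x) (0, 1)) (B (1, 0) (0, 1)) t := by
    have h1 : HasDerivAt (fun s : ℝ => ((s, x) : ℝ × ℝ)) ((1 : ℝ), (0 : ℝ)) t :=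
      HasDerivAt.prodMk (hasDerivAt_id t) (hasDerivAt_const t x)
    have h2 := ((ContinuousLinearMap.apply ℝ ℝ ((0 : ℝ), (1 : ℝ))).hasFDerivAt.comp (t, x) hB)
    exact h2.comp_hasDerivAt t h1
  -- derivative of s ↦ fderiv f (t, s) (1,0) at x
  have hPx : HasDerivAt (fun s : ℝ => fderiv ℝ f (t, s) (1, 0)) (B (1, 0) (0, 1)) x := by
    have h1 : HasDerivAt (fun s : ℝ => ((t, s) : ℝ × ℝ)) ((0 : ℝ), (1 : ℝ)) x :=
      HasDerivAt.prodMk (hasDerivAt_const x t) (hasDerivAt_id x)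
    have h2 := ((ContinuousLinearMap.apply ℝ ℝ ((1 : ℝ), (0 : ℝ))).hasFDerivAt.comp (t, x) hB)
    have h3 := h2.comp_hasDerivAt x h1
    rw [hBsymm]
    exact h3
  -- abbreviations
  set uv : ℝ := u t x with huv
  set pv : ℝ := fderiv ℝ f (t, x) (1, 0) with hpv
  set qv : ℝ := fderiv ℝ f (t, x) (0, 1) with hqv
  set mv : ℝ := B (1, 0) (0, 1) with hmv
  -- rewrite the inner derivs as fderiv applications
  have e1 : (fun s => (s * a (u s x) - x) * u s x * deriv (fun r => u s r) x)
      = fun s => (s * a (u s x) - x) * u s x * fderiv ℝ f (s, x) (0, 1) := by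
    funext s; rw [(hx s x).deriv]
  have e2 : (fun s => (s - t * a (u t s)) * u t s * deriv (fun r => u r s) t)
      = fun s => (s - t * a (u t s)) * u t s * fderiv ℝ f (t, s) (1, 0) := by
    funext s; rw [(ht t s).deriv]
  rw [e1, e2]
  -- basic derivatives
  have h_ut : HasDerivAt (fun s => u s x) pv t := ht t x
  have h_ux : HasDerivAt (fun s => u t s) qv x := hx t x
  have h_au : HasDerivAt (fun s => a (u s x)) (deriv a uv * pv) t :=
    ((ha.differentiable (by simp) uv).hasDerivAt).comp t h_ut
  have h_au2 : HasDerivAt (fun s => a (u t s)) (deriv a uv * qv) x :=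
    ((ha.differentiable (by simp) uv).hasDerivAt).comp x h_ux
  have h_lin : HasDerivAt (fun s : ℝ => s * a (u s x) - x)
      (1 * a (u t x) + t * (deriv a uv * pv)) t :=
    ((hasDerivAt_id t).mul h_au).sub_const x
  have h_lin2 : HasDerivAt (fun s : ℝ => s - t * a (u t s))
      (1 - t * (deriv a uv * qv)) x :=
    (hasDerivAt_id x).sub (h_au2.const_mul t)
  have h_g1 := HasDerivAt.fun_mul (HasDerivAt.fun_mul h_lin h_ut) hQt
  have h_g2 := HasDerivAt.fun_mul (HasDerivAt.fun_mul h_lin2 h_ux) hPx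
  have h_r1 : HasDerivAt (fun s => (u s x) ^ 2 / 2) ((2 * u t x ^ 1 * pv) / 2) t :=
    (h_ut.pow 2).div_const 2
  have h_r2 : HasDerivAt (fun s => A (u t s)) (uv * a uv * qv) x :=
    (hA uv).comp x h_ux
  rw [h_g1.deriv, h_g2.deriv, h_r1.deriv, h_r2.deriv]
  ring
end
end
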